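/- arXiv:2112.14877 — 7 statements merged into one kernel-verified Lean document; each statement's English description precedes it below -/
import Mathlib

section
/- Let σ : ℝ → ℝ be continuous and suppose σ is a neural network approximate identity, i.e., there exist k ∈ ℕ with k ≥ 1 and real numbers α₁,…,α_k, w₁,…,w_k, b₁,…,b_k such that g(x) := Σ_{i=1}^{k} α_i σ(w_i x + b_i) belongs to L¹(ℝ) and ∫_ℝ g(x) dx ≠ 0. Then σ is universal on C_c([−1,1]): for every continuous f : ℝ → ℝ whose support is contained in [−1,1] and every ε > 0, there exist N ∈ ℕ and real numbers c_j, a_j, d_j (j = 1,…,N) such that sup_{x ∈ [−1,1]} |f(x) − Σ_{j=1}^{N} c_j σ(a_j x + d_j)| ≤ ε. -/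
/-!
Normalise `g` to `K := g / ∫ g`, so that `∫ K = 1`. The dilations `δ⁻¹ K (·/δ)` form an
approximate identity: since `f` is uniformly continuous and bounded and the tails of `K` have small
`L¹` norm, `∫ f (x - δ s) K s ds` is uniformly close to `f x` for small `δ`. As `f` vanishes
off `[-1, 1]`, this integral equals `∫_{-1}^{1} f y δ⁻¹ K ((x - y)/δ) dy`, which Riemann sums
approximate uniformly in `x ∈ [-1, 1]`. Each summand is a multiple of `g` composed with an affine
map, and the span of `x ↦ σ (a x + d)` is stable under such compositions.
-/

open MeasureTheory Filter Topology

theorem MeasureTheory.Integrable.exists_tail_setIntegral_abs_le {K : ℝ → ℝ} (hK : Integrable K)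
    {ε : ℝ} (hε : 0 < ε) : ∃ R > 0, ∫ t in {t | R < |t|}, |K t| ≤ ε := by
  have hsm : ∀ R : ℝ, MeasurableSet {t : ℝ | R < |t|} := fun R =>
    measurableSet_lt measurable_const continuous_abs.measurable
  have hanti : Antitone fun R : ℝ => {t : ℝ | R < |t|} := fun R R' h t ht =>
    lt_of_le_of_lt h ht
  have hempty : (⋂ R : ℝ, {t : ℝ | R < |t|}) = ∅ :=
    Set.eq_empty_of_forall_notMem fun t ht => lt_irrefl |t| (Set.mem_iInter.mp ht |t|)
  have hlim := tendsto_setIntegral_of_antitone hsm hanti ⟨0, hK.abs.integrableOn⟩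
  rw [hempty, Measure.restrict_empty, integral_zero_measure] at hlim
  exact ((hlim.eventually (ge_mem_nhds hε)).and (eventually_gt_atTop 0)).exists.imp
    fun R hR => ⟨hR.2, hR.1⟩

theorem UniformContinuous.exists_abs_integral_comp_sub_mul_mul_sub_le {f K : ℝ → ℝ}
    (hf : UniformContinuous f) {M : ℝ} (hM : ∀ x, |f x| ≤ M) (hK : Integrable K)
    (hK1 : ∫ s, K s = 1) {ε : ℝ} (hε : 0 < ε) :
    ∃ δ > 0, ∀ x, |(∫ s, f (x - δ * s) * K s) - f x| ≤ ε := by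
  have hM0 : 0 ≤ M := (abs_nonneg _).trans (hM 0)
  set A := ∫ s, |K s|
  have hA : 0 ≤ A := integral_nonneg fun s => abs_nonneg _
  obtain ⟨R, hR, htail⟩ := hK.exists_tail_setIntegral_abs_le
    (ε := ε / (4 * (M + 1))) (by positivity)
  obtain ⟨η, hη, hfη⟩ := Metric.uniformContinuous_iff.mp hf (ε / (2 * (A + 1))) (by positivity)
  refine ⟨η / (2 * R), by positivity, fun x => ?_⟩
  set δ := η / (2 * R)
  have hsm : MeasurableSet {s : ℝ | R < |s|} :=
    measurableSet_lt measurable_const continuous_abs.measurable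
  -- Near the origin `f` barely moves; on the tail we only use `|f| ≤ M`.
  have hbound : ∀ s, ‖(f (x - δ * s) - f x) * K s‖ ≤
      ε / (2 * (A + 1)) * |K s| + 2 * M * {s : ℝ | R < |s|}.indicator (fun s => |K s|) s := by
    intro s
    rw [Real.norm_eq_abs, abs_mul]
    by_cases hs : R < |s|
    · rw [Set.indicator_of_mem (by exact hs)]
      have : |f (x - δ * s) - f x| ≤ 2 * M :=
        (abs_sub _ _).trans (by linarith [hM (x - δ * s), hM x])
      have : 0 ≤ ε / (2 * (A + 1)) * |K s| := by positivity
      nlinarith [abs_nonneg (K s)]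
    · rw [Set.indicator_of_notMem (by exact hs), mul_zero, add_zero]
      refine mul_le_mul_of_nonneg_right (le_of_lt ?_) (abs_nonneg _)
      refine hfη ?_
      rw [Real.dist_eq, sub_sub_cancel_left, abs_neg, abs_mul, abs_of_pos (by positivity : 0 < δ)]
      calc δ * |s| ≤ δ * R := by gcongr; exact not_lt.mp hs
        _ < η := by simp only [δ]; field_simp; linarith
  have hfK : Integrable fun s => f (x - δ * s) * K s :=
    hK.bdd_mul (c := M) (hf.continuous.comp (by fun_prop)).aestronglyMeasurable
      (ae_of_all _ fun s => hM _)
  have hdom : Integrable fun s =>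
      ε / (2 * (A + 1)) * |K s| + 2 * M * {s : ℝ | R < |s|}.indicator (fun s => |K s|) s :=
    (hK.abs.const_mul _).add ((hK.abs.indicator hsm).const_mul _)
  calc |(∫ s, f (x - δ * s) * K s) - f x|
      = ‖∫ s, (f (x - δ * s) - f x) * K s‖ := by
        simp_rw [sub_mul]
        rw [integral_sub hfK (hK.const_mul _), integral_const_mul, hK1, mul_one, Real.norm_eq_abs]
    _ ≤ ∫ s, (ε / (2 * (A + 1)) * |K s| +
          2 * M * {s : ℝ | R < |s|}.indicator (fun s => |K s|) s) :=
        norm_integral_le_of_norm_le hdom (ae_of_all _ hbound)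
    _ = ε / (2 * (A + 1)) * A + 2 * M * ∫ s in {s : ℝ | R < |s|}, |K s| := by
        rw [integral_add (hK.abs.const_mul _) ((hK.abs.indicator hsm).const_mul _),
          integral_const_mul, integral_const_mul, integral_indicator hsm]
    _ ≤ ε / 2 + ε / 2 := by
        gcongr
        · rw [div_mul_eq_mul_div, div_le_div_iff₀ (by positivity) (by norm_num)]
          nlinarith
        · calc 2 * M * ∫ s in {s : ℝ | R < |s|}, |K s| ≤ 2 * M * (ε / (4 * (M + 1))) := by
                gcongr
            _ ≤ ε / 2 := by
                rw [← mul_div_assoc, div_le_div_iff₀ (by positivity) (by norm_num)]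
                nlinarith
    _ = ε := add_halves ε

theorem integral_comp_sub_mul_mul (f K : ℝ → ℝ) (x : ℝ) {δ : ℝ} (hδ : 0 < δ) :
    ∫ s, f (x - δ * s) * K s = ∫ y, f y * (δ⁻¹ * K ((x - y) / δ)) := by
  have h := Measure.integral_comp_div (fun s => f (x - δ * s) * K s) δ
  rw [abs_of_pos hδ, smul_eq_mul] at h
  simp_rw [mul_left_comm (f _), integral_const_mul, mul_div_cancel₀ _ hδ.ne'] at h ⊢
  rw [← integral_sub_left_eq_self _ volume x] at h
  simp only [sub_sub_cancel] at h
  rw [h, inv_mul_cancel_left₀ hδ.ne']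

theorem exists_abs_intervalIntegral_mul_dilation_sub_le {f K : ℝ → ℝ} {a b : ℝ} (hab : a ≤ b)
    (hf : Continuous f) (hsupp : ∀ x ∉ Set.Icc a b, f x = 0) (hK : Integrable K)
    (hK1 : ∫ s, K s = 1) {ε : ℝ} (hε : 0 < ε) :
    ∃ δ > 0, ∀ x, |(∫ y in a..b, f y * (δ⁻¹ * K ((x - y) / δ))) - f x| ≤ ε := by
  have hfc : HasCompactSupport f := HasCompactSupport.intro isCompact_Icc hsupp
  obtain ⟨M, hM⟩ := hf.bounded_above_of_compact_support hfc
  obtain ⟨δ, hδ, happrox⟩ :=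
    (hfc.uniformContinuous_of_continuous hf).exists_abs_integral_comp_sub_mul_mul_sub_le
      (by simpa only [Real.norm_eq_abs] using hM) hK hK1 hε
  refine ⟨δ, hδ, fun x => ?_⟩
  rw [intervalIntegral.integral_of_le hab, ← integral_Icc_eq_integral_Ioc,
    setIntegral_eq_integral_of_forall_compl_eq_zero fun y hy => by rw [hsupp y hy, zero_mul],
    ← integral_comp_sub_mul_mul _ _ x hδ]
  exact happrox x

theorem abs_intervalIntegral_sub_mul_le {φ : ℝ → ℝ} {t h C : ℝ}
    (hφ : IntervalIntegrable φ volume t (t + h)) (hh : 0 ≤ h)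
    (hC : ∀ y ∈ Set.Ioc t (t + h), |φ y - φ t| ≤ C) :
    |(∫ y in t..t + h, φ y) - h * φ t| ≤ C * h := by
  have hsub : (∫ y in t..t + h, φ y) - h * φ t = ∫ y in t..t + h, (φ y - φ t) := by
    rw [intervalIntegral.integral_sub hφ intervalIntegrable_const, intervalIntegral.integral_const,
      add_sub_cancel_left, smul_eq_mul]
  rw [hsub, ← Real.norm_eq_abs]
  calc ‖∫ y in t..t + h, (φ y - φ t)‖ ≤ C * |t + h - t| :=
        intervalIntegral.norm_integral_le_of_norm_le_const fun y hy => by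
          rw [Set.uIoc_of_le (by linarith)] at hy
          exact hC y hy
    _ = C * h := by rw [add_sub_cancel_left, abs_of_nonneg hh]

theorem exists_abs_intervalIntegral_sub_riemannSum_le {H : ℝ → ℝ → ℝ}
    (hH : Continuous (Function.uncurry H)) {S : Set ℝ} (hS : IsCompact S) {a b : ℝ} (hab : a ≤ b)
    {ε : ℝ} (hε : 0 < ε) :
    ∃ N : ℕ, ∀ x ∈ S, |(∫ y in a..b, H x y) -
      ∑ j ∈ Finset.range N, (b - a) / N * H x (a + j * ((b - a) / N))| ≤ ε := by
  obtain ⟨d, hd, hHd⟩ := Metric.uniformContinuousOn_iff.mp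
    ((hS.prod isCompact_Icc).uniformContinuousOn_of_continuous (s := S ×ˢ Set.Icc a b)
      hH.continuousOn) (ε / (b - a + 1)) (by positivity)
  obtain ⟨N, hN⟩ := exists_nat_gt ((b - a) / d)
  have hN0 : (0 : ℝ) < N := lt_of_le_of_lt (div_nonneg (by linarith) hd.le) hN
  set h := (b - a) / N
  have hh : 0 ≤ h := div_nonneg (by linarith) hN0.le
  have hhd : h < d := by rwa [div_lt_iff₀ hN0, mul_comm, ← div_lt_iff₀ hd]
  set t : ℕ → ℝ := fun j => a + j * h
  have ht_succ : ∀ j, t (j + 1) = t j + h := fun j => by simp only [t]; push_cast; ring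
  have ht_mem : ∀ j ≤ N, t j ∈ Set.Icc a b := fun j hj => by
    have : (j : ℝ) * h ≤ N * h := by gcongr
    refine ⟨by simp only [t]; nlinarith, ?_⟩
    simp only [t, h, mul_div_cancel₀ _ hN0.ne'] at this ⊢
    linarith
  refine ⟨N, fun x hx => ?_⟩
  have hint : ∀ j, IntervalIntegrable (H x) volume (t j) (t j + h) := fun j =>
    (hH.comp (Continuous.prodMk_right x)).intervalIntegrable _ _
  have hcell : ∀ j < N, |(∫ y in t j..t j + h, H x y) - h * H x (t j)| ≤ ε / (b - a + 1) * h := by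
    intro j hj
    refine abs_intervalIntegral_sub_mul_le (hint j) hh fun y hy => le_of_lt ?_
    have hyab : y ∈ Set.Icc a b := ⟨(ht_mem j hj.le).1.trans hy.1.le,
      hy.2.trans ((ht_succ j) ▸ (ht_mem (j + 1) hj).2)⟩
    refine hHd (x, y) ⟨hx, hyab⟩ (x, t j) ⟨hx, ht_mem j hj.le⟩ ?_
    rw [Prod.dist_eq, dist_self, Real.dist_eq, abs_of_pos (sub_pos.mpr hy.1)]
    exact max_lt hd (by linarith [hy.2])
  have hsplit : ∫ y in a..b, H x y = ∑ j ∈ Finset.range N, ∫ y in t j..t j + h, H x y := by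
    have := intervalIntegral.sum_integral_adjacent_intervals (μ := volume) (f := H x) (a := t)
      (n := N) fun j _ => ht_succ j ▸ hint j
    simp_rw [ht_succ] at this
    rw [this]
    simp only [t, h, CharP.cast_eq_zero, zero_mul, add_zero, mul_div_cancel₀ _ hN0.ne']
    ring_nf
  rw [hsplit, ← Finset.sum_sub_distrib]
  calc |∑ j ∈ Finset.range N, ((∫ y in t j..t j + h, H x y) - h * H x (t j))|
      ≤ ∑ j ∈ Finset.range N, ε / (b - a + 1) * h :=
        (Finset.abs_sum_le_sum_abs _ _).trans
          (Finset.sum_le_sum fun j hj => hcell j (Finset.mem_range.mp hj))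
    _ = ε * ((b - a) / (b - a + 1)) := by
        rw [Finset.sum_const, Finset.card_range, nsmul_eq_mul]
        simp only [h]
        field_simp
    _ ≤ ε := mul_le_of_le_one_right hε.le ((div_le_one (by linarith)).mpr (by linarith))

def networkSpan (σ : ℝ → ℝ) : Submodule ℝ (ℝ → ℝ) :=
  Submodule.span ℝ (Set.range fun p : ℝ × ℝ => fun x => σ (p.1 * x + p.2))

namespace networkSpan

variable {σ h : ℝ → ℝ}

theorem activation_mem (a d : ℝ) : (fun x => σ (a * x + d)) ∈ networkSpan σ :=
  Submodule.subset_span ⟨(a, d), rfl⟩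

theorem self_mem : σ ∈ networkSpan σ := by
  simpa using activation_mem (σ := σ) 1 0

theorem comp_affine_mem (hh : h ∈ networkSpan σ) (u v : ℝ) :
    (fun x => h (u * x + v)) ∈ networkSpan σ := by
  suffices networkSpan σ ≤ (networkSpan σ).comap (LinearMap.funLeft ℝ ℝ fun x => u * x + v) from
    this hh
  refine Submodule.span_le.mpr ?_
  rintro _ ⟨⟨a, d⟩, rfl⟩
  have := activation_mem (σ := σ) (a * u) (a * v + d)
  simpa [LinearMap.funLeft, Function.comp_def, mul_add, mul_assoc, add_assoc] using this

theorem sum_mul_comp_affine_mem (hh : h ∈ networkSpan σ) {ι : Type*} (s : Finset ι)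
    (c u v : ι → ℝ) : (fun x => ∑ j ∈ s, c j * h (u j * x + v j)) ∈ networkSpan σ := by
  have := (networkSpan σ).sum_mem (t := s) fun j _ =>
    (networkSpan σ).smul_mem (c j) (comp_affine_mem hh (u j) (v j))
  convert this using 1
  ext x
  simp [Finset.sum_apply]

theorem exists_eq_sum (hh : h ∈ networkSpan σ) :
    ∃ (N : ℕ) (c a d : Fin N → ℝ), ∀ x, h x = ∑ j, c j * σ (a j * x + d j) := by
  obtain ⟨N, c, φ, rfl⟩ := Submodule.mem_span_set'.mp hh
  choose p hp using fun j => (φ j).2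
  refine ⟨N, c, fun j => (p j).1, fun j => (p j).2, fun x => ?_⟩
  simp [Finset.sum_apply, ← hp]

end networkSpan

theorem stmt_4_general (σ : ℝ → ℝ) (hσ : Continuous σ)
    (k : ℕ) (α w b : Fin k → ℝ)
    (hg : Integrable (fun x : ℝ => ∑ i, α i * σ (w i * x + b i)))
    (hg0 : (∫ x : ℝ, ∑ i, α i * σ (w i * x + b i)) ≠ 0) :
    ∀ f : ℝ → ℝ, Continuous f → (∀ x : ℝ, x ∉ Set.Icc (-1 : ℝ) 1 → f x = 0) →
      ∀ ε : ℝ, 0 < ε →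
        ∃ (N : ℕ) (c a d : Fin N → ℝ),
          ∀ x ∈ Set.Icc (-1 : ℝ) 1,
            |f x - ∑ j, c j * σ (a j * x + d j)| ≤ ε := by
  intro f hf hsupp ε hε
  set g := fun x : ℝ => ∑ i, α i * σ (w i * x + b i)
  set I := ∫ x, g x
  have hg_mem : g ∈ networkSpan σ :=
    networkSpan.sum_mul_comp_affine_mem networkSpan.self_mem Finset.univ α w b
  obtain ⟨δ, hδ, hconv⟩ := exists_abs_intervalIntegral_mul_dilation_sub_le (by norm_num) hf hsupp
    (K := fun t => I⁻¹ * g t) (hg.const_mul _) (by rw [integral_const_mul, inv_mul_cancel₀ hg0])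
    (half_pos hε)
  set H : ℝ → ℝ → ℝ := fun x y => f y * (δ⁻¹ * (I⁻¹ * g ((x - y) / δ)))
  obtain ⟨N, hN⟩ := exists_abs_intervalIntegral_sub_riemannSum_le (H := H) (a := -1) (b := 1)
    (by fun_prop) (isCompact_Icc (a := -1) (b := 1)) (by norm_num) (half_pos hε)
  set t : ℕ → ℝ := fun j => -1 + j * ((1 - -1) / N)
  have hnet : (fun x => ∑ j ∈ Finset.range N, (1 - -1) / N * H x (t j)) ∈ networkSpan σ := by
    convert networkSpan.sum_mul_comp_affine_mem hg_mem (Finset.range N)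
      (fun j => (1 - -1) / N * (f (t j) * (δ⁻¹ * I⁻¹))) (fun _ => δ⁻¹) (fun j => -(t j / δ))
      using 3 with x j
    simp only [H]
    ring_nf
  obtain ⟨n, c, a, d, hnet_eq⟩ := networkSpan.exists_eq_sum hnet
  refine ⟨n, c, a, d, fun x hx => ?_⟩
  rw [← hnet_eq]
  calc |f x - ∑ j ∈ Finset.range N, (1 - -1) / N * H x (t j)|
      ≤ |(∫ y in (-1)..1, H x y) - f x| + |(∫ y in (-1)..1, H x y) -
          ∑ j ∈ Finset.range N, (1 - -1) / N * H x (t j)| := by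
        rw [← abs_sub_comm (f x)]
        exact abs_sub_le _ _ _
    _ ≤ ε / 2 + ε / 2 := add_le_add (hconv x) (hN x hx)
    _ = ε := add_halves ε

/-- Any continuous neural network approximate identity (nAI) activation function is universal
in the space of continuous functions with support in `[-1,1]`: one-hidden-layer networks
with activation `σ` approximate such functions to arbitrary accuracy in the uniform norm. -/
theorem stmt_4 (σ : ℝ → ℝ) (hσ : Continuous σ)
    (k : ℕ) (hk : 1 ≤ k) (α w b : Fin k → ℝ)
    (hg : Integrable (fun x : ℝ => ∑ i, α i * σ (w i * x + b i)))
    (hg0 : (∫ x : ℝ, ∑ i, α i * σ (w i * x + b i)) ≠ 0) :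
    ∀ f : ℝ → ℝ, Continuous f → (∀ x : ℝ, x ∉ Set.Icc (-1 : ℝ) 1 → f x = 0) →
      ∀ ε : ℝ, 0 < ε →
        ∃ (N : ℕ) (c a d : Fin N → ℝ),
          ∀ x ∈ Set.Icc (-1 : ℝ) 1,
            |f x - ∑ j, c j * σ (a j * x + d j)| ≤ ε :=
  stmt_4_general σ hσ k α w b hg hg0
end

section
/- For q ∈ ℕ, r := q + 1, let B(x,h) := (1/q!) Σ_{i=0}^{r} (−1)^i (r choose i) RePU(q; x + (r/2 − i)h), and define the n-fold composition 𝔅 : ℝⁿ → ℝ by 𝔅(x₁) := B(x₁, 1) for n = 1 and 𝔅(x₁,…,x_n) := B(x_n, 𝔅(x₁,…,x_{n−1})) for n ≥ 2. Then: (i) 0 ≤ 𝔅(x) ≤ 1 for all x ∈ ℝⁿ; (ii) 𝔅 has compact support, i.e., there exist b₁,…,b_n > 0 such that 𝔅(x) = 0 whenever |x_i| > b_i for some i; and (iii) ∫_{ℝⁿ} 𝔅(x) dx ≤ 1, so 𝔅 ∈ L¹(ℝⁿ). -/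
/-!
The paper's `B(x, h)` equals `h ^ q * M_q (x / h)` for `h > 0` and vanishes for `h = 0`, where
`M_q = Δ^{q+1}(x₊^q / q!)(· - (q+1)/2)` is the centred cardinal B-spline of degree `q`.
Integrating the truncated powers term by term gives `M_{s+1} = 1_{[-1/2,1/2]} ⋆ M_s`, so every
`M_q` takes values in `[0,1]`, vanishes outside `[-(q+1)/2, (q+1)/2]` and has integral `1`.
Hence, for `h ∈ [0,1]`, `B(·, h)` takes values in `[0,1]`, has the same support and integral
`h ^ (q+1) ≤ h`. Feeding `𝔅_n` into the second slot of `B` and integrating out the last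
coordinate first (Fubini) gives `∫ 𝔅_{n+1} ≤ ∫ 𝔅_n ≤ 1` by induction.
-/

open MeasureTheory Set Finset fwdDiff
open scoped Nat Convolution

section FwdDiff

variable {E : Type*} [NormedAddCommGroup E] {f F : ℝ → E}

lemma intervalIntegrable_fwdDiff (hf : ∀ a b, IntervalIntegrable f volume a b) (h a b : ℝ) :
    IntervalIntegrable (Δ_[h] f) volume a b :=
  (by simpa using (hf (a + h) (b + h)).comp_add_right h : IntervalIntegrable (f <| · + h) _ a b)
    |>.sub (hf a b)

lemma intervalIntegrable_fwdDiff_iter (hf : ∀ a b, IntervalIntegrable f volume a b) (h : ℝ)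
    (n : ℕ) (a b : ℝ) : IntervalIntegrable (Δ_[h] ^[n] f) volume a b := by
  induction n generalizing f with
  | zero => exact hf a b
  | succ n ih => exact ih (intervalIntegrable_fwdDiff hf h)

lemma integral_fwdDiff [NormedSpace ℝ E] (hf : ∀ a b, IntervalIntegrable f volume a b)
    (hF : ∀ a b, ∫ t in a..b, f t = F b - F a) (h a b : ℝ) :
    ∫ t in a..b, Δ_[h] f t = Δ_[h] F b - Δ_[h] F a := by
  have hshift : IntervalIntegrable (f <| · + h) volume a b := by
    simpa using (hf (a + h) (b + h)).comp_add_right h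
  simp only [fwdDiff]
  rw [intervalIntegral.integral_sub hshift (hf a b), intervalIntegral.integral_comp_add_right f h,
    hF, hF]
  abel

lemma integral_fwdDiff_iter [NormedSpace ℝ E] (hf : ∀ a b, IntervalIntegrable f volume a b)
    (hF : ∀ a b, ∫ t in a..b, f t = F b - F a) (h : ℝ) (n : ℕ) (a b : ℝ) :
    ∫ t in a..b, Δ_[h] ^[n] f t = Δ_[h] ^[n] F b - Δ_[h] ^[n] F a := by
  induction n generalizing f F with
  | zero => exact hF a b
  | succ n ih => exact ih (intervalIntegrable_fwdDiff hf h) (integral_fwdDiff hf hF h)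

end FwdDiff

lemma fwdDiff_zero_iter_succ_apply {M G : Type*} [AddCommMonoid M] [AddCommGroup G] (f : M → G)
    (n : ℕ) (x : M) : Δ_[(0 : M)] ^[n + 1] f x = 0 := by
  rw [Function.iterate_succ_apply', fwdDiff, add_zero, sub_self]

lemma fwdDiff_iter_comp_mul_left {R G : Type*} [CommSemiring R] [AddCommGroup G] (f : R → G)
    (c : R) (n : ℕ) (y : R) : Δ_[c] ^[n] f (c * y) = Δ_[1] ^[n] (fun z => f (c * z)) y := by
  simp only [fwdDiff_iter_eq_sum_shift, nsmul_eq_mul, mul_one, add_mul, mul_comm c]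

lemma integrable_of_mem_Icc_of_eq_zero {α : Type*} [MeasurableSpace α] {μ : Measure α}
    {f : α → ℝ} {s : Set α} (hs : μ s ≠ ⊤) (hf : Measurable f) (h01 : ∀ x, f x ∈ Icc (0 : ℝ) 1)
    (hzero : ∀ x ∉ s, f x = 0) : Integrable f μ := by
  refine IntegrableOn.integrable_of_forall_notMem_eq_zero ?_ hzero
  refine Measure.integrableOn_of_bounded hs hf.aestronglyMeasurable (M := 1)
    (ae_of_all _ fun x => ?_)
  rw [Real.norm_of_nonneg (h01 x).1]
  exact (h01 x).2

lemma integrable_of_mem_Icc_of_eq_zero_off_cube {ι : Type*} [Fintype ι] {R : ℝ}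
    {f : (ι → ℝ) → ℝ} (hf : Measurable f) (h01 : ∀ x, f x ∈ Icc (0 : ℝ) 1)
    (hzero : ∀ x, (∃ i, R < |x i|) → f x = 0) : Integrable f := by
  refine integrable_of_mem_Icc_of_eq_zero (s := univ.pi fun _ => Icc (-R) R)
    (isCompact_univ_pi fun _ => isCompact_Icc).measure_lt_top.ne hf h01 fun x hx => hzero x ?_
  simp only [mem_univ_pi, Set.mem_Icc, not_forall] at hx
  obtain ⟨i, hi⟩ := hx
  exact ⟨i, lt_abs.mpr (by grind)⟩

noncomputable def repu (p : ℕ) (x : ℝ) : ℝ := if 0 ≤ x then x ^ p else 0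

lemma repu_of_nonneg {p : ℕ} {x : ℝ} (hx : 0 ≤ x) : repu p x = x ^ p := if_pos hx

lemma repu_of_neg {p : ℕ} {x : ℝ} (hx : x < 0) : repu p x = 0 := if_neg hx.not_ge

lemma repu_nonneg (p : ℕ) (x : ℝ) : 0 ≤ repu p x := by
  rcases lt_or_ge x 0 with hx | hx
  · rw [repu_of_neg hx]
  · rw [repu_of_nonneg hx]; positivity

lemma monotone_repu (p : ℕ) : Monotone (repu p) := by
  intro a b hab
  rcases lt_or_ge a 0 with ha | ha
  · rw [repu_of_neg ha]; exact repu_nonneg p b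
  · rw [repu_of_nonneg ha, repu_of_nonneg (ha.trans hab)]; exact pow_le_pow_left₀ ha hab p

lemma measurable_repu (p : ℕ) : Measurable (repu p) := (monotone_repu p).measurable

lemma repu_mul_left (p : ℕ) {c : ℝ} (hc : 0 < c) (x : ℝ) : repu p (c * x) = c ^ p * repu p x := by
  rcases lt_or_ge x 0 with hx | hx
  · rw [repu_of_neg hx, repu_of_neg (mul_neg_of_pos_of_neg hc hx), mul_zero]
  · rw [repu_of_nonneg hx, repu_of_nonneg (by positivity), mul_pow]

lemma continuous_repu_succ (p : ℕ) : Continuous (repu (p + 1)) := by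
  have : repu (p + 1) = fun x => max x 0 ^ (p + 1) := by
    funext x
    rcases lt_or_ge x 0 with hx | hx
    · rw [repu_of_neg hx, max_eq_right hx.le, zero_pow p.succ_ne_zero]
    · rw [repu_of_nonneg hx, max_eq_left hx]
  rw [this]
  fun_prop

lemma hasDerivWithinAt_repu_succ (p : ℕ) (x : ℝ) :
    HasDerivWithinAt (repu (p + 1)) ((p + 1) * repu p x) (Ioi x) x := by
  rcases lt_or_ge x 0 with hx | hx
  · rw [repu_of_neg hx, mul_zero]
    refine (hasDerivAt_const x (0 : ℝ)).hasDerivWithinAt.congr_of_eventuallyEq ?_ (repu_of_neg hx)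
    filter_upwards [nhdsWithin_le_nhds (eventually_lt_nhds hx)] with y hy
    exact repu_of_neg hy
  · rw [repu_of_nonneg hx]
    refine ((hasDerivAt_pow (p + 1) x).hasDerivWithinAt.congr (fun y hy => ?_) (repu_of_nonneg hx))
      |>.congr_deriv (by push_cast; ring)
    exact repu_of_nonneg (hx.trans hy.le)

noncomputable def truncPow (s : ℕ) (x : ℝ) : ℝ := repu s x / s !

lemma monotone_truncPow (s : ℕ) : Monotone (truncPow s) :=
  fun _ _ hab => div_le_div_of_nonneg_right (monotone_repu s hab) (by positivity)

lemma integral_truncPow (s : ℕ) (a b : ℝ) :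
    ∫ t in a..b, truncPow s t = truncPow (s + 1) b - truncPow (s + 1) a := by
  refine intervalIntegral.integral_eq_sub_of_hasDeriv_right
    ((continuous_repu_succ s).div_const _).continuousOn (fun x _ => ?_)
    (monotone_truncPow s).intervalIntegrable
  refine ((hasDerivWithinAt_repu_succ s x).div_const _).congr_deriv ?_
  rw [truncPow, Nat.factorial_succ]
  push_cast
  field_simp

lemma truncPow_comp_mul_left (s : ℕ) {c : ℝ} (hc : 0 < c) :
    (fun x => truncPow s (c * x)) = c ^ s • truncPow s := by
  funext x
  simp only [truncPow, repu_mul_left s hc, Pi.smul_apply, smul_eq_mul]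
  ring

/-- The paper's `B(x, h)`, cf. `repuB_eq_sum`. -/
noncomputable def repuB (q : ℕ) (x h : ℝ) : ℝ :=
  Δ_[h] ^[q + 1] (truncPow q) (x - (q + 1) / 2 * h)

noncomputable def cardinalBSpline (s : ℕ) (x : ℝ) : ℝ := repuB s x 1

lemma repuB_eq_sum (q : ℕ) (x h : ℝ) :
    repuB q x h = (1 / (q ! : ℝ)) * ∑ i ∈ range (q + 2),
      (-1 : ℝ) ^ i * ((q + 1).choose i : ℝ) * repu q (x + (((q : ℝ) + 1) / 2 - i) * h) := by
  rw [repuB, fwdDiff_iter_eq_sum_shift, ← sum_range_reflect, mul_sum]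
  refine sum_congr rfl fun i hi => ?_
  have hi : i ≤ q + 1 := Nat.lt_succ_iff.mp (mem_range.mp hi)
  rw [show q + 1 + 1 - 1 - i = q + 1 - i by omega, Nat.sub_sub_self hi, Nat.choose_symm hi,
    truncPow, zsmul_eq_mul, nsmul_eq_mul, Nat.cast_sub hi]
  push_cast
  ring_nf

lemma measurable_repuB (q : ℕ) : Measurable (Function.uncurry (repuB q)) := by
  have hrepu := measurable_repu q
  simp only [Function.uncurry_def, repuB_eq_sum]
  fun_prop

lemma repuB_zero_right (q : ℕ) (x : ℝ) : repuB q x 0 = 0 :=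
  fwdDiff_zero_iter_succ_apply _ q _

lemma repuB_eq_pow_mul (q : ℕ) {h : ℝ} (hh : 0 < h) (x : ℝ) :
    repuB q x h = h ^ q * cardinalBSpline q (x / h) := by
  have : x - (q + 1) / 2 * h = h * (x / h - (q + 1) / 2) := by field_simp
  rw [cardinalBSpline, repuB, repuB, this, fwdDiff_iter_comp_mul_left, truncPow_comp_mul_left q hh,
    fwdDiff_iter_const_smul, mul_one, Pi.smul_apply, smul_eq_mul]

lemma cardinalBSpline_eq_fwdDiff_iter (s : ℕ) (x : ℝ) :
    cardinalBSpline s x = Δ_[1] ^[s + 1] (truncPow s) (x - (s + 1) / 2) := by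
  rw [cardinalBSpline, repuB, mul_one]

lemma measurable_cardinalBSpline (s : ℕ) : Measurable (cardinalBSpline s) :=
  (measurable_repuB s).comp (measurable_id.prodMk measurable_const)

lemma intervalIntegrable_cardinalBSpline (s : ℕ) (a b : ℝ) :
    IntervalIntegrable (cardinalBSpline s) volume a b := by
  simp only [funext (cardinalBSpline_eq_fwdDiff_iter s)]
  simpa using (intervalIntegrable_fwdDiff_iter (fun _ _ => (monotone_truncPow s).intervalIntegrable)
    1 (s + 1) (a - (s + 1) / 2) (b - (s + 1) / 2)).comp_sub_right ((s + 1) / 2)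

lemma cardinalBSpline_zero : cardinalBSpline 0 = indicator (Ico (-(1 / 2)) (1 / 2)) 1 := by
  funext x
  rw [cardinalBSpline_eq_fwdDiff_iter, zero_add, Function.iterate_one, fwdDiff]
  simp only [truncPow, repu, indicator, Set.mem_Ico, Pi.one_apply, Nat.cast_zero,
    Nat.factorial_zero, Nat.cast_one, pow_zero, div_one]
  split_ifs <;> grind

lemma cardinalBSpline_succ (s : ℕ) (x : ℝ) :
    cardinalBSpline (s + 1) x = ∫ u in x - 1 / 2..x + 1 / 2, cardinalBSpline s u := by
  simp only [cardinalBSpline_eq_fwdDiff_iter]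
  rw [intervalIntegral.integral_comp_sub_right, integral_fwdDiff_iter
      (fun _ _ => (monotone_truncPow s).intervalIntegrable) (integral_truncPow s),
    Function.iterate_succ_apply', fwdDiff]
  congr 2 <;> exact congrArg _ (by push_cast; ring)

lemma cardinalBSpline_succ_eq_convolution (s : ℕ) :
    cardinalBSpline (s + 1) =
      indicator (Icc (-(1 / 2)) (1 / 2)) 1 ⋆[ContinuousLinearMap.lsmul ℝ ℝ] cardinalBSpline s := by
  funext x
  simp only [convolution_def, ContinuousLinearMap.lsmul_apply]
  rw [← indicator_smul_left]
  simp only [Pi.one_apply, one_smul]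
  rw [cardinalBSpline_succ, integral_indicator measurableSet_Icc, integral_Icc_eq_integral_Ioc,
    ← intervalIntegral.integral_of_le (by norm_num), intervalIntegral.integral_comp_sub_left]
  norm_num

lemma cardinalBSpline_mem_Icc (s : ℕ) (x : ℝ) : cardinalBSpline s x ∈ Icc (0 : ℝ) 1 := by
  induction s generalizing x with
  | zero =>
    rw [cardinalBSpline_zero, indicator_apply]
    split_ifs <;> norm_num
  | succ s ih =>
    have hlen : x - 1 / 2 ≤ x + 1 / 2 := by linarith
    rw [cardinalBSpline_succ]
    refine ⟨intervalIntegral.integral_nonneg hlen fun u _ => (ih u).1, ?_⟩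
    calc ∫ u in x - 1 / 2..x + 1 / 2, cardinalBSpline s u
        ≤ ∫ _ in x - 1 / 2..x + 1 / 2, (1 : ℝ) :=
          intervalIntegral.integral_mono_on hlen (intervalIntegrable_cardinalBSpline s _ _)
            intervalIntegrable_const fun u _ => (ih u).2
      _ = 1 := by norm_num

lemma cardinalBSpline_eq_zero (s : ℕ) {x : ℝ} (hx : ((s : ℝ) + 1) / 2 < |x|) :
    cardinalBSpline s x = 0 := by
  induction s generalizing x with
  | zero =>
    rw [cardinalBSpline_zero, indicator_of_notMem]
    rw [Set.mem_Ico, not_and_or, not_le, not_lt]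
    cases abs_cases x <;> [right; left] <;> linarith
  | succ s ih =>
    rw [cardinalBSpline_succ, intervalIntegral.integral_congr (g := fun _ => 0),
      intervalIntegral.integral_zero]
    intro u hu
    rw [Set.uIcc_of_le (by linarith), Set.mem_Icc] at hu
    refine ih ?_
    push_cast at hx
    cases abs_cases x <;> cases abs_cases u <;> linarith

lemma integrable_cardinalBSpline (s : ℕ) : Integrable (cardinalBSpline s) := by
  refine integrable_of_mem_Icc_of_eq_zero (s := Icc (-(((s : ℝ) + 1) / 2)) (((s : ℝ) + 1) / 2))
    (by simp) (measurable_cardinalBSpline s) (cardinalBSpline_mem_Icc s) fun x hx => ?_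
  exact cardinalBSpline_eq_zero s (lt_abs.mpr (by rw [Set.mem_Icc, not_and_or] at hx; grind))

lemma integral_cardinalBSpline (s : ℕ) : ∫ x, cardinalBSpline s x = 1 := by
  induction s with
  | zero =>
    rw [cardinalBSpline_zero, integral_indicator_one measurableSet_Ico,
      Real.volume_real_Ico_of_le (by norm_num)]
    norm_num
  | succ s ih =>
    have hind : Integrable (indicator (Icc (-(1 / 2) : ℝ) (1 / 2)) 1) :=
      (integrable_indicator_iff measurableSet_Icc).mpr
        (integrableOn_const measure_Icc_lt_top.ne : IntegrableOn (fun _ => (1 : ℝ)) _ volume)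
    rw [cardinalBSpline_succ_eq_convolution,
      integral_convolution _ hind (integrable_cardinalBSpline s), ih,
      integral_indicator_one measurableSet_Icc, Real.volume_real_Icc_of_le (by norm_num)]
    norm_num

lemma repuB_mem_Icc (q : ℕ) {h : ℝ} (hh : h ∈ Icc (0 : ℝ) 1) (x : ℝ) :
    repuB q x h ∈ Icc (0 : ℝ) 1 := by
  rcases hh.1.eq_or_lt with rfl | hpos
  · simp [repuB_zero_right]
  obtain ⟨h0, h1⟩ := cardinalBSpline_mem_Icc q (x / h)
  rw [repuB_eq_pow_mul q hpos]
  exact ⟨by positivity, mul_le_one₀ (pow_le_one₀ hh.1 hh.2) h0 h1⟩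

lemma repuB_eq_zero (q : ℕ) {h : ℝ} (hh : h ∈ Icc (0 : ℝ) 1) {x : ℝ}
    (hx : ((q : ℝ) + 1) / 2 < |x|) : repuB q x h = 0 := by
  rcases hh.1.eq_or_lt with rfl | hpos
  · exact repuB_zero_right q x
  have : |x| ≤ |x / h| := by
    rw [abs_div, abs_of_pos hpos]
    exact le_div_self (abs_nonneg x) hpos hh.2
  rw [repuB_eq_pow_mul q hpos, cardinalBSpline_eq_zero q (hx.trans_le this), mul_zero]

lemma integral_repuB (q : ℕ) {h : ℝ} (hh : 0 ≤ h) : ∫ x, repuB q x h = h ^ (q + 1) := by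
  rcases hh.eq_or_lt with rfl | hpos
  · simp [repuB_zero_right]
  simp only [repuB_eq_pow_mul q hpos]
  rw [integral_const_mul, Measure.integral_comp_div, integral_cardinalBSpline, abs_of_pos hpos,
    smul_eq_mul, mul_one, pow_succ]

structure IsBumpKernel (R : ℝ) (K : ℝ → ℝ → ℝ) : Prop where
  measurable : Measurable (Function.uncurry K)
  apply_zero : ∀ x, K x 0 = 0
  mem_Icc : ∀ x, ∀ h ∈ Icc (0 : ℝ) 1, K x h ∈ Icc (0 : ℝ) 1
  eq_zero : ∀ x, ∀ h ∈ Icc (0 : ℝ) 1, R < |x| → K x h = 0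
  integral_le : ∀ h ∈ Icc (0 : ℝ) 1, ∫ x, K x h ≤ h

lemma isBumpKernel_repuB (q : ℕ) : IsBumpKernel (((q : ℝ) + 1) / 2) (repuB q) where
  measurable := measurable_repuB q
  apply_zero := repuB_zero_right q
  mem_Icc x _ hh := repuB_mem_Icc q hh x
  eq_zero _ _ hh hx := repuB_eq_zero q hh hx
  integral_le _ hh := (integral_repuB q hh.1).trans_le (pow_le_of_le_one hh.1 hh.2 q.succ_ne_zero)

structure IsUnitBump {ι : Type*} [Fintype ι] (R : ℝ) (f : (ι → ℝ) → ℝ) : Prop where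
  measurable : Measurable f
  mem_Icc : ∀ x, f x ∈ Icc (0 : ℝ) 1
  eq_zero : ∀ x, (∃ i, R < |x i|) → f x = 0
  integral_le : ∫ x, f x ≤ 1

lemma IsUnitBump.integrable {ι : Type*} [Fintype ι] {R : ℝ} {f : (ι → ℝ) → ℝ}
    (hf : IsUnitBump R f) : Integrable f :=
  integrable_of_mem_Icc_of_eq_zero_off_cube hf.measurable hf.mem_Icc hf.eq_zero

lemma isUnitBump_fin_zero (R : ℝ) : IsUnitBump R (fun _ : Fin 0 → ℝ => 1) where
  measurable := measurable_const
  mem_Icc _ := by norm_num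
  eq_zero _ := fun ⟨i, _⟩ => i.elim0
  integral_le := by rw [Measure.volume_pi_eq_dirac]; simp

lemma IsBumpKernel.isUnitBump_snoc {R : ℝ} {K : ℝ → ℝ → ℝ} {m : ℕ} {F : (Fin m → ℝ) → ℝ}
    (hK : IsBumpKernel R K) (hF : IsUnitBump R F) :
    IsUnitBump R (fun x : Fin (m + 1) → ℝ => K (x (Fin.last m)) (F (Fin.init x))) := by
  set f := fun x : Fin (m + 1) → ℝ => K (x (Fin.last m)) (F (Fin.init x))
  have hf_meas : Measurable f := by
    have hK_meas := hK.measurable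
    have hF_meas := hF.measurable
    fun_prop
  have hf_mem : ∀ x, f x ∈ Icc (0 : ℝ) 1 := fun x => hK.mem_Icc _ _ (hF.mem_Icc _)
  have hf_zero : ∀ x : Fin (m + 1) → ℝ, (∃ i, R < |x i|) → f x = 0 := by
    rintro x ⟨i, hi⟩
    induction i using Fin.lastCases with
    | last => exact hK.eq_zero _ _ (hF.mem_Icc _) hi
    | cast j => simp only [f, hF.eq_zero (Fin.init x) ⟨j, hi⟩, hK.apply_zero]
  refine ⟨hf_meas, hf_mem, hf_zero, ?_⟩
  set e := MeasurableEquiv.piFinSuccAbove (fun _ => ℝ) (Fin.last m)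
  have he : MeasurePreserving e := volume_preserving_piFinSuccAbove (fun _ => ℝ) (Fin.last m)
  set G : ℝ × (Fin m → ℝ) → ℝ := fun p => K p.1 (F p.2)
  have hfG : f = G ∘ e := by
    funext x
    simp [f, G, e, MeasurableEquiv.piFinSuccAbove]
  have hG_int : Integrable G := (he.integrable_comp_emb e.measurableEmbedding).mp <|
    hfG ▸ integrable_of_mem_Icc_of_eq_zero_off_cube hf_meas hf_mem hf_zero
  calc ∫ x, f x = ∫ p, G p := by rw [hfG]; exact he.integral_comp' G
    _ = ∫ y, ∫ t, K t (F y) := integral_prod_symm G hG_int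
    _ ≤ ∫ y, F y := integral_mono_of_nonneg
        (ae_of_all _ fun y => integral_nonneg fun t => (hK.mem_Icc t _ (hF.mem_Icc y)).1)
        hF.integrable (ae_of_all _ fun y => hK.integral_le _ (hF.mem_Icc y))
    _ ≤ 1 := hF.integral_le

/-- The `n`-fold composition of the RePU `B`-function takes values in `[0,1]`, has compact
support, and is integrable on `ℝⁿ` with integral at most `1`. -/
theorem stmt_6 (q n : ℕ) (hn : 1 ≤ n) (RePU : ℕ → ℝ → ℝ)
    (hRePU : ∀ (p : ℕ) (x : ℝ), RePU p x = if 0 ≤ x then x ^ p else 0)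
    (B : ℝ → ℝ → ℝ)
    (hB : ∀ x h : ℝ, B x h = (1 / (q.factorial : ℝ)) *
      ∑ i ∈ Finset.range (q + 2), (-1 : ℝ) ^ i * ((q + 1).choose i : ℝ) *
        RePU q (x + (((q : ℝ) + 1) / 2 - (i : ℝ)) * h))
    (𝓑 : (m : ℕ) → (Fin m → ℝ) → ℝ)
    (h1 : ∀ x : Fin 1 → ℝ, 𝓑 1 x = B (x 0) 1)
    (hstep : ∀ (m : ℕ) (x : Fin (m + 2) → ℝ),
      𝓑 (m + 2) x = B (x (Fin.last (m + 1))) (𝓑 (m + 1) (Fin.init x))) :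
    (∀ x : Fin n → ℝ, 0 ≤ 𝓑 n x ∧ 𝓑 n x ≤ 1) ∧
    (∃ b : Fin n → ℝ, (∀ i, 0 < b i) ∧
      ∀ x : Fin n → ℝ, (∃ i, b i < |x i|) → 𝓑 n x = 0) ∧
    Integrable (𝓑 n) ∧ (∫ x : Fin n → ℝ, 𝓑 n x) ≤ 1 := by
  have hB_eq : B = repuB q := by
    funext x h
    rw [hB, repuB_eq_sum]
    simp only [hRePU, repu]
  have hK := isBumpKernel_repuB q
  have hbump : ∀ m, IsUnitBump (((q : ℝ) + 1) / 2) (𝓑 (m + 1)) := by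
    intro m
    induction m with
    | zero =>
      convert hK.isUnitBump_snoc (isUnitBump_fin_zero _) using 1
      funext x
      rw [h1, hB_eq]
      rfl
    | succ m ih =>
      convert hK.isUnitBump_snoc ih using 1
      funext x
      rw [hstep, hB_eq]
  obtain ⟨m, rfl⟩ := Nat.exists_eq_add_of_le' hn
  exact ⟨(hbump m).mem_Icc, ⟨fun _ => ((q : ℝ) + 1) / 2, fun _ => by positivity,
    (hbump m).eq_zero⟩, (hbump m).integrable, (hbump m).integral_le⟩
end

section
/- Let σ_p(x) := log(1 + e^x) be the softplus function and, for h ∈ ℝ, define the second central difference B_p(x,h) := σ_p(x + h) − 2 σ_p(x) + σ_p(x − h). Then: (i) B_p(x,h) ≥ 0 for all x ∈ ℝ; (ii) B_p(·,h) is an even function of x; (iii) B_p(x,h) → 0 as |x| → ∞; and (iv) B_p(·,h) ∈ L¹(ℝ) with ∫_ℝ B_p(x,h) dx = h². -/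
/-!
Put `g y = σ_p y - σ_p (y - h)`. Then `B x = g (x + h) - g x`, so `∫_{-R}^{R} B` telescopes to
`∫_R^{R+h} g - ∫_{-R}^{-R+h} g`, which tends to `h · h - h · 0`: by `σ_p (-y) = σ_p y - y`, `g` tends
to `h` at `+∞` and to `0` at `-∞`; the same identity makes `B` even. Nonnegativity is
`(1 + eˣ)² ≤ (1 + e^{x+h}) (1 + e^{x-h})`, i.e. AM-GM for `e^{x±h}`, and for a nonnegative function
the convergence of its symmetric integrals already gives integrability.
-/

open MeasureTheory Filter Topology Real

section ShiftedDifference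

variable {g : ℝ → ℝ}

theorem intervalIntegral_comp_add_sub (hg : Continuous g) (a b h : ℝ) :
    ∫ x in a..b, (g (x + h) - g x) = (∫ x in b..b + h, g x) - ∫ x in a..a + h, g x := by
  have hgh : Continuous fun x ↦ g (x + h) := hg.comp (continuous_add_const h)
  rw [intervalIntegral.integral_sub (hgh.intervalIntegrable a b) (hg.intervalIntegrable a b),
    intervalIntegral.integral_comp_add_right,
    intervalIntegral.integral_interval_sub_interval_comm' (hg.intervalIntegrable _ _)
      (hg.intervalIntegrable _ _) (hg.intervalIntegrable _ _)]

theorem tendsto_intervalIntegral_add_const {l : Filter ℝ} [l.IsCountablyGenerated] {C L : ℝ}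
    (hg : Continuous g) (hC : ∀ x, |g x| ≤ C) (hL : Tendsto g l (𝓝 L))
    (hl : ∀ t, Tendsto (· + t) l l) (h : ℝ) :
    Tendsto (fun R ↦ ∫ x in R..R + h, g x) l (𝓝 (h * L)) := by
  have hshift (R : ℝ) : ∫ x in R..R + h, g x = ∫ t in 0..h, g (t + R) := by
    rw [intervalIntegral.integral_comp_add_right, zero_add, add_comm h]
  simp_rw [hshift]
  have hlim := intervalIntegral.tendsto_integral_filter_of_dominated_convergence (μ := volume)
    (a := 0) (b := h) (F := fun R t ↦ g (t + R)) (f := fun _ ↦ L) (fun _ ↦ C)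
    (.of_forall fun R ↦ (hg.comp (continuous_add_const R)).aestronglyMeasurable)
    (.of_forall fun R ↦ .of_forall fun t _ ↦ hC (t + R)) intervalIntegrable_const
    (.of_forall fun t _ ↦ hL.comp ((hl t).congr fun R ↦ add_comm R t))
  simpa [intervalIntegral.integral_const, mul_comm] using hlim

theorem tendsto_intervalIntegral_comp_add_sub {C L₀ L₁ : ℝ} (hg : Continuous g)
    (hC : ∀ x, |g x| ≤ C) (hbot : Tendsto g atBot (𝓝 L₀)) (htop : Tendsto g atTop (𝓝 L₁))
    (h : ℝ) :
    Tendsto (fun R ↦ ∫ x in -R..R, (g (x + h) - g x)) atTop (𝓝 (h * (L₁ - L₀))) := by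
  simp_rw [intervalIntegral_comp_add_sub hg, mul_sub]
  exact (tendsto_intervalIntegral_add_const hg hC htop
      (fun t ↦ tendsto_atTop_add_const_right _ t tendsto_id) h).sub
    ((tendsto_intervalIntegral_add_const hg hC hbot
      (fun t ↦ tendsto_atBot_add_const_right _ t tendsto_id) h).comp tendsto_neg_atTop_atBot)

end ShiftedDifference

theorem integrable_and_integral_eq_of_tendsto_intervalIntegral {f : ℝ → ℝ} {I : ℝ}
    (hf : LocallyIntegrable f) (hf₀ : ∀ x, 0 ≤ f x)
    (hI : Tendsto (fun R ↦ ∫ x in -R..R, f x) atTop (𝓝 I)) :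
    Integrable f ∧ ∫ x, f x = I := by
  have hfi : Integrable f :=
    integrable_of_intervalIntegral_norm_tendsto I
      (fun R ↦ (hf.integrableOn_isCompact isCompact_Icc).mono_set Set.Ioc_subset_Icc_self)
      tendsto_neg_atTop_atBot tendsto_id (by simpa only [Real.norm_of_nonneg (hf₀ _), id] using hI)
  exact ⟨hfi, tendsto_nhds_unique
    (intervalIntegral_tendsto_integral hfi tendsto_neg_atTop_atBot tendsto_id) hI⟩

noncomputable def softplus (x : ℝ) : ℝ := log (1 + exp x)

@[fun_prop]
theorem continuous_softplus : Continuous softplus :=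
  (continuous_const.add continuous_exp).log fun x ↦ (by positivity : 0 < 1 + exp x).ne'

theorem softplus_neg (x : ℝ) : softplus (-x) = softplus x - x := by
  have h : 1 + exp (-x) = exp (-x) * (1 + exp x) := by
    rw [mul_add, mul_one, ← exp_add, neg_add_cancel, exp_zero, add_comm]
  rw [softplus, softplus, h, log_mul (by positivity) (by positivity), log_exp]
  ring

theorem tendsto_softplus_atBot : Tendsto softplus atBot (𝓝 0) := by
  have h : Tendsto (fun x ↦ 1 + exp x) atBot (𝓝 1) := by
    simpa using tendsto_exp_atBot.const_add 1
  have := (continuousAt_log one_ne_zero).tendsto.comp h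
  rwa [log_one] at this

theorem monotone_softplus : Monotone softplus := fun _ _ hab ↦
  log_le_log (by positivity) (by gcongr)

theorem softplus_add_le (x t : ℝ) (ht : 0 ≤ t) : softplus (x + t) ≤ softplus x + t := by
  have h : 1 + exp (x + t) ≤ exp t * (1 + exp x) := by
    rw [exp_add]; nlinarith [one_le_exp ht, exp_pos x]
  calc softplus (x + t) ≤ log (exp t * (1 + exp x)) := log_le_log (by positivity) h
    _ = softplus x + t := by rw [log_mul (by positivity) (by positivity), log_exp, softplus, add_comm]

theorem abs_softplus_sub_softplus_le (a b : ℝ) : |softplus a - softplus b| ≤ |a - b| := by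
  wlog hab : b ≤ a generalizing a b
  · rw [abs_sub_comm, abs_sub_comm a]; exact this b a (le_of_not_ge hab)
  have h := softplus_add_le b (a - b) (sub_nonneg.2 hab)
  rw [add_sub_cancel] at h
  rw [abs_of_nonneg (sub_nonneg.2 (monotone_softplus hab)), abs_of_nonneg (sub_nonneg.2 hab)]
  linarith

theorem two_mul_softplus_le (x h : ℝ) : 2 * softplus x ≤ softplus (x + h) + softplus (x - h) := by
  have hprod : (1 + exp x) ^ 2 ≤ (1 + exp (x + h)) * (1 + exp (x - h)) := by
    have hamgm : 2 * exp x ≤ exp (x + h) + exp (x - h) := by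
      have hcosh : exp (x + h) + exp (x - h) = 2 * exp x * cosh h := by
        rw [cosh_eq, sub_eq_add_neg, exp_add, exp_add]; ring
      rw [hcosh]
      nlinarith [one_le_cosh h, exp_pos x]
    have hmul : exp (x + h) * exp (x - h) = exp x ^ 2 := by
      rw [← exp_add, sq, ← exp_add]; ring_nf
    nlinarith
  have := log_le_log (by positivity) hprod
  rwa [log_pow, log_mul (by positivity) (by positivity)] at this

noncomputable def softplusSecondDiff (h x : ℝ) : ℝ :=
  softplus (x + h) - 2 * softplus x + softplus (x - h)

theorem softplusSecondDiff_nonneg (h x : ℝ) : 0 ≤ softplusSecondDiff h x := by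
  have := two_mul_softplus_le x h
  rw [softplusSecondDiff]; linarith

theorem softplusSecondDiff_neg (h x : ℝ) : softplusSecondDiff h (-x) = softplusSecondDiff h x := by
  rw [softplusSecondDiff, softplusSecondDiff, show -x + h = -(x - h) by ring,
    show -x - h = -(x + h) by ring, softplus_neg, softplus_neg, softplus_neg]
  ring

theorem continuous_softplusSecondDiff (h : ℝ) : Continuous (softplusSecondDiff h) := by
  unfold softplusSecondDiff; fun_prop

theorem tendsto_softplusSecondDiff_atBot (h : ℝ) :
    Tendsto (softplusSecondDiff h) atBot (𝓝 0) := by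
  have hshift (t : ℝ) : Tendsto (fun x ↦ softplus (x + t)) atBot (𝓝 0) :=
    tendsto_softplus_atBot.comp (tendsto_atBot_add_const_right _ t tendsto_id)
  have := ((hshift h).sub (tendsto_softplus_atBot.const_mul 2)).add (hshift (-h))
  simp only [mul_zero, sub_zero, add_zero, ← sub_eq_add_neg] at this
  exact this

theorem tendsto_softplusSecondDiff_atTop (h : ℝ) :
    Tendsto (softplusSecondDiff h) atTop (𝓝 0) :=
  ((tendsto_softplusSecondDiff_atBot h).comp tendsto_neg_atTop_atBot).congr
    (softplusSecondDiff_neg h)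

theorem softplusSecondDiff_eq_sub (h x : ℝ) : softplusSecondDiff h x =
    (softplus (x + h) - softplus (x + h - h)) - (softplus x - softplus (x - h)) := by
  rw [softplusSecondDiff, add_sub_cancel_right]; ring

theorem tendsto_softplus_sub_softplus_sub_atBot (h : ℝ) :
    Tendsto (fun y ↦ softplus y - softplus (y - h)) atBot (𝓝 0) := by
  have := tendsto_softplus_atBot.sub
    (tendsto_softplus_atBot.comp (tendsto_atBot_add_const_right _ (-h) tendsto_id))
  simp only [sub_zero, ← sub_eq_add_neg, Function.comp_def, id] at this
  exact this

theorem tendsto_softplus_sub_softplus_sub_atTop (h : ℝ) :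
    Tendsto (fun y ↦ softplus y - softplus (y - h)) atTop (𝓝 h) := by
  have hneg (y : ℝ) : softplus y - softplus (y - h) = h + softplus (-y) - softplus (-y + h) := by
    rw [show -y + h = -(y - h) by ring, softplus_neg, softplus_neg]; ring
  have hbot (t : ℝ) : Tendsto (fun y ↦ softplus (-y + t)) atTop (𝓝 0) :=
    tendsto_softplus_atBot.comp (tendsto_atBot_add_const_right _ t tendsto_neg_atTop_atBot)
  simp_rw [hneg]
  simpa using ((hbot 0).const_add h).sub (hbot h)

theorem tendsto_intervalIntegral_softplusSecondDiff (h : ℝ) :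
    Tendsto (fun R ↦ ∫ x in -R..R, softplusSecondDiff h x) atTop (𝓝 (h ^ 2)) := by
  simp_rw [softplusSecondDiff_eq_sub]
  simpa [sq] using tendsto_intervalIntegral_comp_add_sub
    (continuous_softplus.sub (continuous_softplus.comp (continuous_sub_right h)))
    (fun y ↦ (abs_softplus_sub_softplus_le y (y - h)).trans_eq (by rw [sub_sub_cancel]))
    (tendsto_softplus_sub_softplus_sub_atBot h) (tendsto_softplus_sub_softplus_sub_atTop h) h

/-- Properties of the softplus `B`-function, the second central difference of
`σ_p(x) = log(1 + eˣ)`: nonnegativity, evenness, vanishing at infinity, integrability,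
and total integral `h²`. -/
theorem stmt_8 (h : ℝ) (B : ℝ → ℝ)
    (hB : ∀ x : ℝ, B x = Real.log (1 + Real.exp (x + h))
      - 2 * Real.log (1 + Real.exp x) + Real.log (1 + Real.exp (x - h))) :
    (∀ x : ℝ, 0 ≤ B x) ∧
    (∀ x : ℝ, B (-x) = B x) ∧
    Tendsto B atTop (nhds 0) ∧ Tendsto B atBot (nhds 0) ∧
    Integrable B ∧ (∫ x : ℝ, B x) = h ^ 2 := by
  obtain rfl : B = softplusSecondDiff h := funext hB
  exact ⟨softplusSecondDiff_nonneg h, softplusSecondDiff_neg h,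
    tendsto_softplusSecondDiff_atTop h, tendsto_softplusSecondDiff_atBot h,
    integrable_and_integral_eq_of_tendsto_intervalIntegral
      (continuous_softplusSecondDiff h).locallyIntegrable (softplusSecondDiff_nonneg h)
      (tendsto_intervalIntegral_softplusSecondDiff h)⟩
end

section
/- Let σ : ℝ → ℝ be a measurable generalized sigmoidal function with limits L at +∞ and ℓ at −∞, L ≠ ℓ, tail exponent α > 0, and tail points x⁻ < 0 < x⁺, and for h ∈ ℝ define B(x,h) := (1/(2(L − ℓ))) (σ(x + h) − σ(x − h)). Then: (i) B(·,h) ∈ L¹(ℝ) with ∫_ℝ B(x,h) dx = h; and (ii) for every h ≠ 0 and every compact interval [m, M], the series Σ_{k=−N}^{N} B(x + kh, h) converges uniformly for x ∈ [m, M] as N → ∞ to sign(h). -/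
/-!
Split `σ = τ + stepFun L ℓ`, where the step function jumps from `ℓ` to `L` at `0`. The tail bounds
make `τ` integrable, so by translation invariance it contributes nothing to
`∫ σ (x + h) - σ (x - h)`, while the step part is `L - ℓ` times the indicator of an interval of
length `2 |h|`, with the sign of `h`.

The partial sums telescope to
`(σ (x + (N + 1) h) - σ (x - (N + 1) h)) + (σ (x + N h) - σ (x - N h))`. For `x` in a bounded
set, `x ± N h` escapes to `±∞` uniformly, so each bracket tends to `± (L - ℓ)` uniformly.
-/

open MeasureTheory Filter Set Topology Asymptotics

section ShiftedLimits

variable {ι E : Type*} {l : Filter ι} {s : Set ℝ} {v : ι → ℝ}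

theorem tendsto_comp_add_of_tendsto_atTop {α : Type*} {f : ℝ → α} {l' : Filter α}
    (hf : Tendsto f atTop l') (hs : BddBelow s) (hv : Tendsto v l atTop) :
    Tendsto (fun q : ι × ℝ => f (q.2 + v q.1)) (l ×ˢ 𝓟 s) l' := by
  obtain ⟨b, hb⟩ := hs
  exact hf.comp <| tendsto_atTop_add_left_of_le' _ b
    ((eventually_principal.2 hb).prod_inr l) (hv.comp tendsto_fst)

theorem tendsto_comp_add_of_tendsto_atBot {α : Type*} {f : ℝ → α} {l' : Filter α}
    (hf : Tendsto f atBot l') (hs : BddAbove s) (hv : Tendsto v l atBot) :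
    Tendsto (fun q : ι × ℝ => f (q.2 + v q.1)) (l ×ˢ 𝓟 s) l' := by
  obtain ⟨b, hb⟩ := hs
  exact hf.comp <| tendsto_atBot_add_left_of_ge' _ b
    ((eventually_principal.2 hb).prod_inr l) (hv.comp tendsto_fst)

variable [NormedAddCommGroup E] {σ : ℝ → E} {L ℓ : E}

theorem tendsto_comp_add_sub_comp_sub_of_atTop (hL : Tendsto σ atTop (𝓝 L))
    (hl : Tendsto σ atBot (𝓝 ℓ)) (hs : Bornology.IsBounded s) (hv : Tendsto v l atTop) :
    Tendsto (fun q : ι × ℝ => σ (q.2 + v q.1) - σ (q.2 - v q.1)) (l ×ˢ 𝓟 s) (𝓝 (L - ℓ)) := by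
  simp only [sub_eq_add_neg (_ : ℝ)]
  exact (tendsto_comp_add_of_tendsto_atTop hL hs.bddBelow hv).sub
    (tendsto_comp_add_of_tendsto_atBot hl hs.bddAbove (tendsto_neg_atTop_atBot.comp hv))

theorem tendsto_comp_add_sub_comp_sub_of_atBot (hL : Tendsto σ atTop (𝓝 L))
    (hl : Tendsto σ atBot (𝓝 ℓ)) (hs : Bornology.IsBounded s) (hv : Tendsto v l atBot) :
    Tendsto (fun q : ι × ℝ => σ (q.2 + v q.1) - σ (q.2 - v q.1)) (l ×ˢ 𝓟 s) (𝓝 (ℓ - L)) := by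
  simp only [sub_eq_add_neg (_ : ℝ)]
  exact (tendsto_comp_add_of_tendsto_atBot hl hs.bddAbove hv).sub
    (tendsto_comp_add_of_tendsto_atTop hL hs.bddBelow (tendsto_neg_atBot_atTop.comp hv))

end ShiftedLimits

theorem Finset.sum_Icc_sub_shift {G : Type*} [AddCommGroup G] (g : ℤ → G) (N : ℕ) :
    ∑ k ∈ Finset.Icc (-(N : ℤ)) N, (g (k + 1) - g (k - 1)) =
      (g (N + 1) - g (-(N + 1))) + (g N - g (-N)) := by
  induction N with
  | zero => simp
  | succ n ih =>
    have hIcc : Finset.Icc (-((n + 1 : ℕ) : ℤ)) ((n + 1 : ℕ) : ℤ) =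
        insert (-(n + 1 : ℤ)) (insert (n + 1 : ℤ) (Finset.Icc (-(n : ℤ)) n)) := by
      ext k; simp only [Finset.mem_Icc, Finset.mem_insert]; omega
    rw [hIcc, Finset.sum_insert (by simp; omega), Finset.sum_insert (by simp), ih]
    push_cast
    ring_nf
    abel

theorem integrableAtFilter_abs_rpow_atTop {r : ℝ} (hr : r < -1) :
    IntegrableAtFilter (fun x : ℝ => |x| ^ r) atTop :=
  ⟨Ioi 1, Ioi_mem_atTop 1, (integrableOn_Ioi_rpow_of_lt hr one_pos).congr_fun
    (fun x hx => by simp only [abs_of_pos (one_pos.trans (mem_Ioi.1 hx))]) measurableSet_Ioi⟩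

theorem integrableAtFilter_abs_rpow_atBot {r : ℝ} (hr : r < -1) :
    IntegrableAtFilter (fun x : ℝ => |x| ^ r) atBot := by
  rw [← map_neg_atTop, ← Measure.map_neg_eq_self (volume : Measure ℝ),
    measurableEmbedding_neg.integrableAtFilter_map_iff]
  simpa [Function.comp_def] using integrableAtFilter_abs_rpow_atTop hr

theorem isBigO_abs_rpow_of_abs_le {f : ℝ → ℝ} {l : Filter ℝ} {C r : ℝ}
    (hf : ∀ᶠ x in l, |f x| ≤ C * |x| ^ r) : f =O[l] fun x => |x| ^ r :=
  .of_bound C <| hf.mono fun x hx => by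
    simpa only [Real.norm_eq_abs, abs_of_nonneg (Real.rpow_nonneg (abs_nonneg x) r)] using hx

theorem locallyIntegrable_of_abs_le {f : ℝ → ℝ} (hf : Measurable f) {M : ℝ}
    (hM : ∀ x, |f x| ≤ M) : LocallyIntegrable f :=
  (memLp_top_of_bound hf.aestronglyMeasurable M (ae_of_all _ hM)).locallyIntegrable le_top

noncomputable def stepFun (L ℓ : ℝ) (x : ℝ) : ℝ := if 0 ≤ x then L else ℓ

theorem locallyIntegrable_stepFun (L ℓ : ℝ) : LocallyIntegrable (stepFun L ℓ) :=
  locallyIntegrable_of_abs_le (Measurable.ite measurableSet_Ici measurable_const measurable_const)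
    (M := max |L| |ℓ|) fun x => by unfold stepFun; split_ifs <;> simp

theorem stepFun_add_sub_stepFun_sub {L ℓ h : ℝ} (hh : 0 ≤ h) :
    (fun x => stepFun L ℓ (x + h) - stepFun L ℓ (x - h)) =
      (Ico (-h) h).indicator fun _ => L - ℓ := by
  ext x
  simp only [stepFun, indicator_apply, mem_Ico]
  split_ifs <;> grind

theorem integrable_sub_stepFun {σ : ℝ → ℝ} {L ℓ r : ℝ} (hσ : LocallyIntegrable σ) (hr : r < -1)
    (htop : (fun x => L - σ x) =O[atTop] fun x => |x| ^ r)
    (hbot : (fun x => σ x - ℓ) =O[atBot] fun x => |x| ^ r) :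
    Integrable fun x => σ x - stepFun L ℓ x := by
  refine (hσ.sub (locallyIntegrable_stepFun L ℓ)).integrable_of_isBigO_atBot_atTop ?_
    (integrableAtFilter_abs_rpow_atBot hr) ?_ (integrableAtFilter_abs_rpow_atTop hr)
  · refine hbot.congr' ?_ EventuallyEq.rfl
    filter_upwards [eventually_lt_atBot 0] with x hx
    simp [stepFun, not_le.2 hx]
  · refine htop.neg_left.congr' ?_ EventuallyEq.rfl
    filter_upwards [eventually_ge_atTop 0] with x hx
    simp [stepFun, hx]

theorem integrable_stepFun_add_sub_stepFun_sub (L ℓ h : ℝ) :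
    Integrable (fun x => stepFun L ℓ (x + h) - stepFun L ℓ (x - h)) ∧
      ∫ x, stepFun L ℓ (x + h) - stepFun L ℓ (x - h) = 2 * h * (L - ℓ) := by
  have hnonneg : ∀ h : ℝ, 0 ≤ h → Integrable (fun x => stepFun L ℓ (x + h) - stepFun L ℓ (x - h)) ∧
      ∫ x, stepFun L ℓ (x + h) - stepFun L ℓ (x - h) = 2 * h * (L - ℓ) := fun h hh => by
    rw [stepFun_add_sub_stepFun_sub hh, integrable_indicator_iff measurableSet_Ico,
      integral_indicator_const _ measurableSet_Ico, Real.volume_real_Ico_of_le (by linarith),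
      smul_eq_mul]
    exact ⟨integrableOn_const (by simp), by ring⟩
  rcases le_total 0 h with hh | hh
  · exact hnonneg h hh
  · have hneg : (fun x => stepFun L ℓ (x + h) - stepFun L ℓ (x - h)) =
        -fun x => stepFun L ℓ (x + -h) - stepFun L ℓ (x - -h) := by
      ext x; simp only [Pi.neg_apply, sub_neg_eq_add, ← sub_eq_add_neg, neg_sub]
    obtain ⟨hint, hintegral⟩ := hnonneg (-h) (neg_nonneg.2 hh)
    rw [hneg, integrable_neg_iff, integral_neg', hintegral]
    exact ⟨hint, by ring⟩

theorem integrable_comp_add_sub_comp_sub {σ : ℝ → ℝ} {L ℓ : ℝ}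
    (hσ : Integrable fun x => σ x - stepFun L ℓ x) (h : ℝ) :
    Integrable (fun x => σ (x + h) - σ (x - h)) ∧
      ∫ x, σ (x + h) - σ (x - h) = 2 * h * (L - ℓ) := by
  set τ := fun x => σ x - stepFun L ℓ x
  have hsplit : (fun x => σ (x + h) - σ (x - h)) =
      fun x => (τ (x + h) - τ (x - h)) + (stepFun L ℓ (x + h) - stepFun L ℓ (x - h)) := by
    ext x; simp only [τ]; ring
  have hτ : Integrable fun x => τ (x + h) - τ (x - h) :=
    (hσ.comp_add_right h).sub (hσ.comp_sub_right h)
  obtain ⟨hstep, hstep_integral⟩ := integrable_stepFun_add_sub_stepFun_sub L ℓ h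
  rw [hsplit, integral_add hτ hstep, integral_sub (hσ.comp_add_right h) (hσ.comp_sub_right h),
    integral_add_right_eq_self τ h, integral_sub_right_eq_self τ h, sub_self, zero_add]
  exact ⟨hτ.add hstep, hstep_integral⟩

noncomputable def sigmoidBump (σ : ℝ → ℝ) (L ℓ x h : ℝ) : ℝ :=
  1 / (2 * (L - ℓ)) * (σ (x + h) - σ (x - h))

section SigmoidBump

variable {σ : ℝ → ℝ} {L ℓ : ℝ}

theorem integrable_sigmoidBump (hσ : Integrable fun x => σ x - stepFun L ℓ x) (h : ℝ) :
    Integrable fun x => sigmoidBump σ L ℓ x h :=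
  (integrable_comp_add_sub_comp_sub hσ h).1.const_mul _

theorem integral_sigmoidBump (hσ : Integrable fun x => σ x - stepFun L ℓ x) (hLl : L ≠ ℓ)
    (h : ℝ) :
    ∫ x, sigmoidBump σ L ℓ x h = h := by
  have hLl' : L - ℓ ≠ 0 := sub_ne_zero.2 hLl
  simp only [sigmoidBump]
  rw [integral_const_mul, (integrable_comp_add_sub_comp_sub hσ h).2]
  field_simp

theorem sum_Icc_sigmoidBump (x h : ℝ) (N : ℕ) :
    ∑ k ∈ Finset.Icc (-(N : ℤ)) N, sigmoidBump σ L ℓ (x + k * h) h =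
      1 / (2 * (L - ℓ)) *
        ((σ (x + (N + 1) * h) - σ (x - (N + 1) * h)) + (σ (x + N * h) - σ (x - N * h))) := by
  simp only [sigmoidBump, ← Finset.mul_sum]
  congr 1
  convert Finset.sum_Icc_sub_shift (fun k : ℤ => σ (x + k * h)) N using 3 <;> push_cast <;> ring_nf

theorem tendstoUniformlyOn_sum_Icc_sigmoidBump (hL : Tendsto σ atTop (𝓝 L))
    (hl : Tendsto σ atBot (𝓝 ℓ)) (hLl : L ≠ ℓ) {h : ℝ} (hh : h ≠ 0) {s : Set ℝ}
    (hs : Bornology.IsBounded s) :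
    TendstoUniformlyOn
      (fun (N : ℕ) (x : ℝ) => ∑ k ∈ Finset.Icc (-(N : ℤ)) N, sigmoidBump σ L ℓ (x + k * h) h)
      (fun _ => Real.sign h) atTop s := by
  have hLl' : L - ℓ ≠ 0 := sub_ne_zero.2 hLl
  simp only [sum_Icc_sigmoidBump]
  rw [← tendsto_prod_principal_iff]
  have hN : Tendsto (fun N : ℕ => (N : ℝ)) atTop atTop := tendsto_natCast_atTop_atTop
  have hN1 : Tendsto (fun N : ℕ => (N : ℝ) + 1) atTop atTop := tendsto_atTop_add_const_right _ 1 hN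
  rcases hh.lt_or_gt with hneg | hpos
  · rw [show Real.sign h = 1 / (2 * (L - ℓ)) * ((ℓ - L) + (ℓ - L)) by
      rw [Real.sign_of_neg hneg]; field_simp; ring]
    exact ((tendsto_comp_add_sub_comp_sub_of_atBot hL hl hs (hN1.atTop_mul_const_of_neg hneg)).add
      (tendsto_comp_add_sub_comp_sub_of_atBot hL hl hs
        (hN.atTop_mul_const_of_neg hneg))).const_mul _
  · rw [show Real.sign h = 1 / (2 * (L - ℓ)) * ((L - ℓ) + (L - ℓ)) by
      rw [Real.sign_of_pos hpos]; field_simp; ring]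
    exact ((tendsto_comp_add_sub_comp_sub_of_atTop hL hl hs (hN1.atTop_mul_const hpos)).add
      (tendsto_comp_add_sub_comp_sub_of_atTop hL hl hs (hN.atTop_mul_const hpos))).const_mul _

end SigmoidBump

theorem stmt_10_general (σ : ℝ → ℝ) (hmeas : Measurable σ) (L ℓ α xm xp : ℝ)
    (hbdd : ∃ M : ℝ, ∀ x : ℝ, |σ x| ≤ M)
    (hL : Tendsto σ atTop (nhds L)) (hl : Tendsto σ atBot (nhds ℓ)) (hLl : L ≠ ℓ)
    (hα : 0 < α)
    (htailm : ∃ C : ℝ, ∀ x : ℝ, x < xm → |σ x - ℓ| ≤ C * |x| ^ (-(1 + α)))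
    (htailp : ∃ C : ℝ, ∀ x : ℝ, xp < x → |L - σ x| ≤ C * |x| ^ (-(1 + α)))
    (B : ℝ → ℝ → ℝ)
    (hB : ∀ x h : ℝ, B x h = (1 / (2 * (L - ℓ))) * (σ (x + h) - σ (x - h))) :
    (∀ h : ℝ, Integrable (fun x => B x h) ∧ (∫ x : ℝ, B x h) = h) ∧
    (∀ h : ℝ, h ≠ 0 → ∀ m M : ℝ,
      TendstoUniformlyOn
        (fun (N : ℕ) (x : ℝ) => ∑ k ∈ Finset.Icc (-(N : ℤ)) (N : ℤ), B (x + (k : ℝ) * h) h)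
        (fun _ => Real.sign h) atTop (Set.Icc m M)) := by
  obtain rfl : B = sigmoidBump σ L ℓ := funext₂ hB
  obtain ⟨Mσ, hMσ⟩ := hbdd
  obtain ⟨Cm, hCm⟩ := htailm
  obtain ⟨Cp, hCp⟩ := htailp
  have hτ : Integrable fun x => σ x - stepFun L ℓ x :=
    integrable_sub_stepFun (locallyIntegrable_of_abs_le hmeas hMσ) (by linarith)
      (isBigO_abs_rpow_of_abs_le ((eventually_gt_atTop xp).mono hCp))
      (isBigO_abs_rpow_of_abs_le ((eventually_lt_atBot xm).mono hCm))
  exact ⟨fun h => ⟨integrable_sigmoidBump hτ h, integral_sigmoidBump hτ hLl h⟩,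
    fun h hh m M => tendstoUniformlyOn_sum_Icc_sigmoidBump hL hl hLl hh (Metric.isBounded_Icc m M)⟩

/-- For a measurable generalized sigmoidal function, the `B`-function is integrable with
integral `h`, and the symmetric partial sums `Σ_{k=-N}^{N} B(x + kh, h)` converge uniformly
on compact intervals to `sign h`. -/
theorem stmt_10 (σ : ℝ → ℝ) (hmeas : Measurable σ) (L ℓ α xm xp : ℝ)
    (hbdd : ∃ M : ℝ, ∀ x : ℝ, |σ x| ≤ M)
    (hL : Tendsto σ atTop (nhds L)) (hl : Tendsto σ atBot (nhds ℓ)) (hLl : L ≠ ℓ)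
    (hα : 0 < α) (hxm : xm < 0) (hxp : 0 < xp)
    (htailm : ∃ C : ℝ, ∀ x : ℝ, x < xm → |σ x - ℓ| ≤ C * |x| ^ (-(1 + α)))
    (htailp : ∃ C : ℝ, ∀ x : ℝ, xp < x → |L - σ x| ≤ C * |x| ^ (-(1 + α)))
    (B : ℝ → ℝ → ℝ)
    (hB : ∀ x h : ℝ, B x h = (1 / (2 * (L - ℓ))) * (σ (x + h) - σ (x - h))) :
    (∀ h : ℝ, Integrable (fun x => B x h) ∧ (∫ x : ℝ, B x h) = h) ∧
    (∀ h : ℝ, h ≠ 0 → ∀ m M : ℝ,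
      TendstoUniformlyOn
        (fun (N : ℕ) (x : ℝ) => ∑ k ∈ Finset.Icc (-(N : ℤ)) (N : ℤ), B (x + (k : ℝ) * h) h)
        (fun _ => Real.sign h) atTop (Set.Icc m M)) :=
  stmt_10_general σ hmeas L ℓ α xm xp hbdd hL hl hLl hα htailm htailp B hB
end

section
/- Let σ : ℝ → ℝ be a nondecreasing generalized sigmoidal function with limits L at +∞ and ℓ at −∞, L ≠ ℓ, tail exponent α > 0 and tail points x⁻ < 0 < x⁺, and define B(x,h) := (1/(2(L − ℓ)))(σ(x + h) − σ(x − h)). Let 𝔅 : ℝⁿ → ℝ be the n-fold composition 𝔅(x₁) := B(x₁,1), 𝔅(x₁,…,x_n) := B(x_n, 𝔅(x₁,…,x_{n−1})). Then 𝔅 ∈ L¹(ℝⁿ) and ∫_{ℝⁿ} 𝔅(x) dx = 1. -/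
/-!
Monotonicity makes `σ (t + h) - σ (t - h)` nonnegative, and its integral over `[-R, R]`
telescopes to the difference of the integrals of `σ` over the windows of width `2h` around `R`
and `-R`, which are squeezed to `2h L` and `2h ℓ`. Hence `B (·, h)` is a nonnegative density of
total mass `h`, and Fubini in the last variable shows that each composition has the same
integral as the previous one, starting from `∫ B (x, 1) dx = 1`.
-/

open MeasureTheory Filter Topology intervalIntegral

theorem Monotone.mul_le_intervalIntegral {f : ℝ → ℝ} (hf : Monotone f) {a b : ℝ} (hab : a ≤ b) :
    (b - a) * f a ≤ ∫ t in a..b, f t := by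
  simpa [mul_comm] using
    integral_mono_on hab intervalIntegrable_const (hf.intervalIntegrable (μ := volume))
      fun t ht => hf ht.1

theorem Monotone.intervalIntegral_le_mul {f : ℝ → ℝ} (hf : Monotone f) {a b : ℝ} (hab : a ≤ b) :
    ∫ t in a..b, f t ≤ (b - a) * f b := by
  simpa [mul_comm] using
    integral_mono_on hab (hf.intervalIntegrable (μ := volume)) intervalIntegrable_const
      fun t ht => hf ht.2

theorem Monotone.tendsto_intervalIntegral_window {f : ℝ → ℝ} (hf : Monotone f) {ι : Type*}
    {l : Filter ι} {l' : Filter ℝ} {x : ι → ℝ} {c h : ℝ} (hh : 0 ≤ h) (hc : Tendsto f l' (𝓝 c))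
    (hx : ∀ s, Tendsto (fun i => x i + s) l l') :
    Tendsto (fun i => ∫ t in (x i - h)..(x i + h), f t) l (𝓝 (2 * h * c)) := by
  have hlim : ∀ s, Tendsto (fun i => 2 * h * f (x i + s)) l (𝓝 (2 * h * c)) := fun s =>
    (hc.comp (hx s)).const_mul _
  refine tendsto_of_tendsto_of_tendsto_of_le_of_le
    (g := fun i => 2 * h * f (x i - h)) ((hlim (-h)).congr fun i => ?_) (hlim h) (fun i => ?_)
    fun i => ?_
  · rw [← sub_eq_add_neg]
  · simpa [two_mul, add_mul] using hf.mul_le_intervalIntegral (by linarith : x i - h ≤ x i + h)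
  · simpa [two_mul, add_mul] using hf.intervalIntegral_le_mul (by linarith : x i - h ≤ x i + h)

theorem intervalIntegral_sub_comp_sub {f : ℝ → ℝ} (hf : ∀ a b, IntervalIntegrable f volume a b)
    (a b h : ℝ) :
    ∫ t in a..b, (f (t + h) - f (t - h)) =
      (∫ t in (b - h)..(b + h), f t) - ∫ t in (a - h)..(a + h), f t := by
  have hplus : IntervalIntegrable (fun t => f (t + h)) volume a b := by
    simpa using (hf (a + h) (b + h)).comp_add_right h
  have hminus : IntervalIntegrable (fun t => f (t - h)) volume a b := by
    simpa using (hf (a - h) (b - h)).comp_sub_right h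
  rw [integral_sub hplus hminus, integral_comp_add_right, integral_comp_sub_right]
  have hright := integral_add_adjacent_intervals (hf (a + h) (b - h)) (hf (b - h) (b + h))
  have hleft := integral_add_adjacent_intervals (hf (a - h) (a + h)) (hf (a + h) (b - h))
  linarith

theorem integrable_and_integral_eq_of_tendsto_intervalIntegral_s11 {g : ℝ → ℝ} (hg : ∀ t, 0 ≤ g t)
    (hgi : ∀ a b, IntervalIntegrable g volume a b) {I : ℝ}
    (hI : Tendsto (fun R => ∫ t in (-R)..R, g t) atTop (𝓝 I)) :
    Integrable g ∧ ∫ t, g t = I := by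
  have hint : Integrable g := by
    refine integrable_of_intervalIntegral_norm_tendsto I (fun R => (hgi (-R) R).1)
      tendsto_neg_atTop_atBot tendsto_id (hI.congr fun R => ?_)
    exact integral_congr fun t _ => (Real.norm_of_nonneg (hg t)).symm
  exact ⟨hint, tendsto_nhds_unique
    (intervalIntegral_tendsto_integral hint tendsto_neg_atTop_atBot tendsto_id) hI⟩

theorem Monotone.integrable_and_integral_sub_comp_sub {f : ℝ → ℝ} (hf : Monotone f) {L ℓ : ℝ}
    (hL : Tendsto f atTop (𝓝 L)) (hl : Tendsto f atBot (𝓝 ℓ)) {h : ℝ} (hh : 0 ≤ h) :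
    Integrable (fun t => f (t + h) - f (t - h)) ∧
      ∫ t, (f (t + h) - f (t - h)) = 2 * h * (L - ℓ) := by
  have hshift : ∀ s, Monotone fun t => f (t + s) := fun s a b hab => hf (by linarith)
  refine integrable_and_integral_eq_of_tendsto_intervalIntegral_s11
    (fun t => sub_nonneg.2 (hf (show t - h ≤ t + h by linarith)))
    (fun a b => (hshift h).intervalIntegrable.sub
      (by simpa only [← sub_eq_add_neg] using (hshift (-h)).intervalIntegrable)) ?_
  simp only [intervalIntegral_sub_comp_sub fun _ _ => hf.intervalIntegrable, mul_sub]
  exact (hf.tendsto_intervalIntegral_window hh hL fun s =>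
      tendsto_atTop_add_const_right _ s tendsto_id).sub
    (hf.tendsto_intervalIntegral_window hh hl fun s =>
      tendsto_atBot_add_const_right _ s tendsto_neg_atTop_atBot)

structure PreservesMass (K : ℝ → ℝ → ℝ) : Prop where
  measurable : Measurable (Function.uncurry K)
  nonneg : ∀ x {h}, 0 ≤ h → 0 ≤ K x h
  integrable : ∀ {h}, 0 ≤ h → Integrable (K · h)
  integral_eq : ∀ {h}, 0 ≤ h → ∫ x, K x h = h

namespace PreservesMass

variable {K : ℝ → ℝ → ℝ}

theorem integrable_and_integral_prod (hK : PreservesMass K) {α : Type*} [MeasurableSpace α]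
    {μ : Measure α} [SFinite μ] {g : α → ℝ} (hg : Measurable g) (hg0 : ∀ y, 0 ≤ g y)
    (hgi : Integrable g μ) :
    Integrable (fun p : ℝ × α => K p.1 (g p.2)) (volume.prod μ) ∧
      ∫ p, K p.1 (g p.2) ∂(volume.prod μ) = ∫ y, g y ∂μ := by
  have hmeas : Measurable fun p : ℝ × α => K p.1 (g p.2) :=
    hK.measurable.comp (measurable_fst.prodMk (hg.comp measurable_snd))
  have hfiber : (fun y => ∫ x, K x (g y)) = g := funext fun y => hK.integral_eq (hg0 y)
  have hint : Integrable (fun p : ℝ × α => K p.1 (g p.2)) (volume.prod μ) := by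
    refine (integrable_prod_iff' hmeas.aestronglyMeasurable).2
      ⟨.of_forall fun y => hK.integrable (hg0 y), ?_⟩
    simpa only [Real.norm_of_nonneg (hK.nonneg _ (hg0 _)), hfiber] using hgi
  refine ⟨hint, ?_⟩
  rw [integral_prod_symm _ hint, hfiber]

theorem integrable_and_integral_comp_init (hK : PreservesMass K) {m : ℕ}
    {g : (Fin (m + 1) → ℝ) → ℝ} (hg : Measurable g) (hg0 : ∀ y, 0 ≤ g y) (hgi : Integrable g) :
    Integrable (fun x : Fin (m + 2) → ℝ => K (x (Fin.last (m + 1))) (g (Fin.init x))) ∧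
      ∫ x : Fin (m + 2) → ℝ, K (x (Fin.last (m + 1))) (g (Fin.init x)) = ∫ y, g y := by
  have he := volume_preserving_piFinSuccAbove (fun _ : Fin (m + 2) => ℝ) (Fin.last (m + 1))
  set e := MeasurableEquiv.piFinSuccAbove (fun _ : Fin (m + 2) => ℝ) (Fin.last (m + 1))
  have hcomp : (fun x : Fin (m + 2) → ℝ => K (x (Fin.last (m + 1))) (g (Fin.init x))) =
      (fun p : ℝ × (Fin (m + 1) → ℝ) => K p.1 (g p.2)) ∘ e := by
    ext x
    simp [e]
  obtain ⟨hint, hval⟩ := hK.integrable_and_integral_prod hg hg0 hgi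
  rw [hcomp]
  exact ⟨(he.integrable_comp_emb e.measurableEmbedding).2 hint,
    (he.integral_comp e.measurableEmbedding _).trans hval⟩

theorem iterate (hK : PreservesMass K) (𝓑 : (m : ℕ) → (Fin m → ℝ) → ℝ)
    (h1 : ∀ x : Fin 1 → ℝ, 𝓑 1 x = K (x 0) 1)
    (hstep : ∀ (m : ℕ) (x : Fin (m + 2) → ℝ),
      𝓑 (m + 2) x = K (x (Fin.last (m + 1))) (𝓑 (m + 1) (Fin.init x))) (m : ℕ) :
    Measurable (𝓑 (m + 1)) ∧ (∀ x, 0 ≤ 𝓑 (m + 1) x) ∧ Integrable (𝓑 (m + 1)) ∧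
      ∫ x, 𝓑 (m + 1) x = 1 := by
  induction m with
  | zero =>
    set e := MeasurableEquiv.funUnique (Fin 1) ℝ
    have he : MeasurePreserving e := volume_preserving_funUnique (Fin 1) ℝ
    have hcomp : 𝓑 1 = (K · 1) ∘ e := funext h1
    have hK1 : Measurable (K · 1) := hK.measurable.comp (measurable_id.prodMk measurable_const)
    rw [hcomp]
    exact ⟨hK1.comp e.measurable, fun x => hK.nonneg _ zero_le_one,
      (he.integrable_comp_emb e.measurableEmbedding).2 (hK.integrable zero_le_one),
      (he.integral_comp e.measurableEmbedding _).trans (hK.integral_eq zero_le_one)⟩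
  | succ k ih =>
    obtain ⟨hmeas, hnn, hint, hval⟩ := ih
    have hcomp : 𝓑 (k + 2) = fun x => K (x (Fin.last (k + 1))) (𝓑 (k + 1) (Fin.init x)) :=
      funext (hstep k)
    obtain ⟨hint', hval'⟩ := hK.integrable_and_integral_comp_init hmeas hnn hint
    rw [hcomp]
    refine ⟨?_, fun x => hK.nonneg _ (hnn _), hint', hval'.trans hval⟩
    have hinit : Measurable (Fin.init : (Fin (k + 2) → ℝ) → Fin (k + 1) → ℝ) :=
      measurable_pi_lambda _ fun j => measurable_pi_apply _
    exact hK.measurable.comp ((measurable_pi_apply _).prodMk (hmeas.comp hinit))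

end PreservesMass

theorem Monotone.preservesMass_sub_comp_sub {σ : ℝ → ℝ} (hσ : Monotone σ) {L ℓ : ℝ}
    (hL : Tendsto σ atTop (𝓝 L)) (hl : Tendsto σ atBot (𝓝 ℓ)) (hLl : L ≠ ℓ) :
    PreservesMass fun x h => (1 / (2 * (L - ℓ))) * (σ (x + h) - σ (x - h)) := by
  have hpos : 0 < L - ℓ :=
    sub_pos.2 ((hσ.le_of_tendsto hl 0).trans (hσ.ge_of_tendsto hL 0) |>.lt_of_ne hLl.symm)
  have hmeas := hσ.measurable
  refine ⟨?_, fun x h hh => ?_, fun hh => ?_, fun {h} hh => ?_⟩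
  · exact ((hmeas.comp (measurable_fst.add measurable_snd)).sub
      (hmeas.comp (measurable_fst.sub measurable_snd))).const_mul _
  · exact mul_nonneg (by positivity) (sub_nonneg.2 (hσ (by linarith)))
  · exact (hσ.integrable_and_integral_sub_comp_sub hL hl hh).1.const_mul _
  · rw [MeasureTheory.integral_const_mul, (hσ.integrable_and_integral_sub_comp_sub hL hl hh).2]
    field_simp

theorem stmt_11_general (n : ℕ) (hn : 1 ≤ n) (σ : ℝ → ℝ) (hmono : Monotone σ) (L ℓ : ℝ)
    (hL : Tendsto σ atTop (nhds L)) (hl : Tendsto σ atBot (nhds ℓ)) (hLl : L ≠ ℓ)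
    (B : ℝ → ℝ → ℝ)
    (hB : ∀ x h : ℝ, B x h = (1 / (2 * (L - ℓ))) * (σ (x + h) - σ (x - h)))
    (𝓑 : (m : ℕ) → (Fin m → ℝ) → ℝ)
    (h1 : ∀ x : Fin 1 → ℝ, 𝓑 1 x = B (x 0) 1)
    (hstep : ∀ (m : ℕ) (x : Fin (m + 2) → ℝ),
      𝓑 (m + 2) x = B (x (Fin.last (m + 1))) (𝓑 (m + 1) (Fin.init x))) :
    Integrable (𝓑 n) ∧ (∫ x : Fin n → ℝ, 𝓑 n x) = 1 := by
  obtain ⟨m, rfl⟩ := Nat.exists_eq_add_of_le' hn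
  obtain rfl : B = _ := funext₂ hB
  obtain ⟨-, -, hint, hval⟩ := (hmono.preservesMass_sub_comp_sub hL hl hLl).iterate 𝓑 h1 hstep m
  exact ⟨hint, hval⟩

/-- For a nondecreasing generalized sigmoidal function, the `n`-fold composition of its
`B`-function is integrable on `ℝⁿ` with integral exactly `1`. -/
theorem stmt_11 (n : ℕ) (hn : 1 ≤ n) (σ : ℝ → ℝ) (hmono : Monotone σ) (L ℓ α xm xp : ℝ)
    (hbdd : ∃ M : ℝ, ∀ x : ℝ, |σ x| ≤ M)
    (hL : Tendsto σ atTop (nhds L)) (hl : Tendsto σ atBot (nhds ℓ)) (hLl : L ≠ ℓ)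
    (hα : 0 < α) (hxm : xm < 0) (hxp : 0 < xp)
    (htailm : ∃ C : ℝ, ∀ x : ℝ, x < xm → |σ x - ℓ| ≤ C * |x| ^ (-(1 + α)))
    (htailp : ∃ C : ℝ, ∀ x : ℝ, xp < x → |L - σ x| ≤ C * |x| ^ (-(1 + α)))
    (B : ℝ → ℝ → ℝ)
    (hB : ∀ x h : ℝ, B x h = (1 / (2 * (L - ℓ))) * (σ (x + h) - σ (x - h)))
    (𝓑 : (m : ℕ) → (Fin m → ℝ) → ℝ)
    (h1 : ∀ x : Fin 1 → ℝ, 𝓑 1 x = B (x 0) 1)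
    (hstep : ∀ (m : ℕ) (x : Fin (m + 2) → ℝ),
      𝓑 (m + 2) x = B (x (Fin.last (m + 1))) (𝓑 (m + 1) (Fin.init x))) :
    Integrable (𝓑 n) ∧ (∫ x : Fin n → ℝ, 𝓑 n x) = 1 :=
  stmt_11_general n hn σ hmono L ℓ hL hl hLl B hB 𝓑 h1 hstep
end

section
/- Let α ∈ ℝ and let σ be the exponential linear unit, σ(x) := α(e^x − 1) for x ≤ 0 and σ(x) := x for x > 0. For h ∈ ℝ define the second central difference D(x,h) := σ(x + h) − 2σ(x) + σ(x − h). Then: (i) D(·,h) ∈ L¹(ℝ) with ∫_ℝ D(x,h) dx = h²; (ii) ∫_ℝ |D(x,h)| dx ≤ h² + 2|α||h| + 2|α|(e^{−|h|} − 1)²; and (iii) for |h| ≤ 1, |D(x,h)| ≤ max{1 + 4|α|, 2 + |α|} for all x ∈ ℝ. -/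
/-!
For `h ≥ 0` the second difference of the ELU is explicit on four pieces: it equals
`α (1 - e^{-h})² e^{x+h}` for `x ≤ -h`, the tent `h - |x|` plus `α` times a quantity in
`[-1, 1]` on `[-h, h]`, and `0` for `x ≥ h`. Integrating the pieces gives `h²` exactly
(the `α`-terms cancel) and the `L¹` bound, and the pieces also give `|D(x, h)| ≤ h + |α|`.
Since `D(x, -h) = D(x, h)`, negative `h` reduces to positive `h`.
-/

open MeasureTheory Set Real

theorem abs_add_mul_le {a b c : ℝ} (ha : 0 ≤ a) (hc : |c| ≤ 1) : |a + b * c| ≤ a + |b| :=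
  calc |a + b * c| ≤ |a| + |b| * |c| := by rw [← abs_mul]; exact abs_add_le _ _
    _ ≤ a + |b| := by
      rw [abs_of_nonneg ha]; gcongr; exact mul_le_of_le_one_right (abs_nonneg b) hc

theorem integral_const_add_mul_add_mul_exp (p q r a b : ℝ) :
    ∫ x in a..b, (p + q * x + r * exp x) =
      p * (b - a) + q * (b ^ 2 - a ^ 2) / 2 + r * (exp b - exp a) := by
  have hint : ∀ g : ℝ → ℝ, Continuous g → IntervalIntegrable g volume a b :=
    fun g hg => hg.intervalIntegrable a b
  rw [intervalIntegral.integral_add (hint _ (by fun_prop)) (hint _ (by fun_prop)),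
    intervalIntegral.integral_add intervalIntegrable_const (hint _ (by fun_prop)),
    intervalIntegral.integral_const, intervalIntegral.integral_const_mul,
    intervalIntegral.integral_const_mul, integral_id, integral_exp, smul_eq_mul]
  ring

theorem integral_abs_neg_self {a : ℝ} (ha : 0 ≤ a) : ∫ x in (-a)..a, |x| = a ^ 2 := by
  have hint : ∀ b c : ℝ, IntervalIntegrable (fun x : ℝ => |x|) volume b c :=
    fun b c => continuous_abs.intervalIntegrable b c
  have neg_part : ∫ x in (-a)..0, |x| = ∫ x in (-a)..0, -x :=
    intervalIntegral.integral_congr fun x hx => by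
      rw [uIcc_of_le (by linarith)] at hx; exact abs_of_nonpos hx.2
  have pos_part : ∫ x in (0:ℝ)..a, |x| = ∫ x in (0:ℝ)..a, x :=
    intervalIntegral.integral_congr fun x hx => by
      rw [uIcc_of_le ha] at hx; exact abs_of_nonneg hx.1
  rw [← intervalIntegral.integral_add_adjacent_intervals (hint _ 0) (hint 0 _), neg_part,
    pos_part, intervalIntegral.integral_neg, integral_id, integral_id]
  ring

theorem integral_mul_exp_add_Iic (c h : ℝ) : ∫ x in Iic (-h), c * exp (x + h) = c := by
  simp_rw [exp_add, ← mul_assoc]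
  rw [integral_mul_const, integral_const_mul, integral_exp_Iic, mul_assoc, ← exp_add,
    neg_add_cancel, exp_zero, mul_one]

theorem Continuous.integrable_of_integrableOn_Iic_of_integrableOn_Ioi {E : Type*}
    [NormedAddCommGroup E] {f : ℝ → E} (hf : Continuous f) {a b : ℝ}
    (ha : IntegrableOn f (Iic a)) (hb : IntegrableOn f (Ioi b)) : Integrable f := by
  have cover : univ ⊆ Iic a ∪ Icc a b ∪ Ioi b := fun x _ => by
    rcases le_or_gt x a with hxa | hxa
    · exact Or.inl (Or.inl hxa)
    rcases le_or_gt x b with hxb | hxb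
    · exact Or.inl (Or.inr ⟨hxa.le, hxb⟩)
    · exact Or.inr hxb
  exact integrableOn_univ.mp (((ha.union hf.integrableOn_Icc).union hb).mono_set cover)

theorem integral_eq_Iic_add_intervalIntegral_add_Ioi {E : Type*} [NormedAddCommGroup E]
    [NormedSpace ℝ E] {f : ℝ → E} (hf : Integrable f) (a b : ℝ) :
    ∫ x, f x = (∫ x in Iic a, f x) + (∫ x in a..b, f x) + ∫ x in Ioi b, f x := by
  rw [add_assoc, intervalIntegral.integral_interval_add_Ioi hf.integrableOn hf.integrableOn,
    intervalIntegral.integral_Iic_add_Ioi hf.integrableOn hf.integrableOn]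

noncomputable def elu (α x : ℝ) : ℝ := if x ≤ 0 then α * (exp x - 1) else x

def secondDiff (f : ℝ → ℝ) (h x : ℝ) : ℝ := f (x + h) - 2 * f x + f (x - h)

theorem secondDiff_neg (f : ℝ → ℝ) (h : ℝ) : secondDiff f (-h) = secondDiff f h := by
  ext x
  simp only [secondDiff, ← sub_eq_add_neg, sub_neg_eq_add]
  ring

theorem Continuous.secondDiff {f : ℝ → ℝ} (hf : Continuous f) (h : ℝ) :
    Continuous (secondDiff f h) := by
  unfold _root_.secondDiff
  fun_prop

section Piecewise

variable {α x : ℝ}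

theorem elu_of_nonpos (hx : x ≤ 0) : elu α x = α * (exp x - 1) := if_pos hx

theorem elu_of_nonneg (hx : 0 ≤ x) : elu α x = x := by
  rcases hx.eq_or_lt with rfl | hx
  · simp [elu]
  · exact if_neg hx.not_ge

theorem continuous_elu (α : ℝ) : Continuous (elu α) :=
  continuous_if_le continuous_id continuous_const (by fun_prop) continuous_id.continuousOn
    fun x hx => by simp [show x = 0 from hx]

variable {h : ℝ}

theorem secondDiff_elu_of_le_neg (hh : 0 ≤ h) (hx : x ≤ -h) :
    secondDiff (elu α) h x = α * (1 - exp (-h)) ^ 2 * exp (x + h) := by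
  rw [secondDiff, elu_of_nonpos (by linarith), elu_of_nonpos (by linarith),
    elu_of_nonpos (by linarith), sub_eq_add_neg x h, exp_add, exp_add]
  have : exp h * exp (-h) = 1 := by rw [← exp_add, add_neg_cancel, exp_zero]
  linear_combination α * exp x * (2 - exp (-h)) * this

theorem secondDiff_elu_of_mem_Icc_neg (hh : 0 ≤ h) (hx : x ∈ Icc (-h) 0) :
    secondDiff (elu α) h x = x + h + α * (1 - (2 - exp (-h)) * exp x) := by
  rw [secondDiff, elu_of_nonneg (by linarith [hx.1]), elu_of_nonpos hx.2,
    elu_of_nonpos (by linarith [hx.2]), sub_eq_add_neg x h, exp_add]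
  ring

theorem secondDiff_elu_of_mem_Icc (hh : 0 ≤ h) (hx : x ∈ Icc 0 h) :
    secondDiff (elu α) h x = h - x + α * (exp (-h) * exp x - 1) := by
  rw [secondDiff, elu_of_nonneg (by linarith [hx.1]), elu_of_nonneg hx.1,
    elu_of_nonpos (by linarith [hx.2]), sub_eq_add_neg x h, exp_add]
  ring

theorem secondDiff_elu_of_le (hh : 0 ≤ h) (hx : h ≤ x) : secondDiff (elu α) h x = 0 := by
  rw [secondDiff, elu_of_nonneg (by linarith), elu_of_nonneg (by linarith),
    elu_of_nonneg (by linarith)]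
  ring

end Piecewise

section Bounds

variable {α h x : ℝ}

theorem abs_secondDiff_elu_of_le_neg (hh : 0 ≤ h) (hx : x ≤ -h) :
    |secondDiff (elu α) h x| = |α| * (1 - exp (-h)) ^ 2 * exp (x + h) := by
  rw [secondDiff_elu_of_le_neg hh hx, abs_mul, abs_mul, abs_sq,
    abs_of_pos (exp_pos _)]

theorem abs_secondDiff_elu_le_of_mem_Icc (hh : 0 ≤ h) (hx : x ∈ Icc (-h) h) :
    |secondDiff (elu α) h x| ≤ h - |x| + |α| := by
  have hE : exp (-h) ≤ 1 := exp_le_one_iff.mpr (by linarith)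
  rcases le_total x 0 with hx0 | hx0
  · rw [secondDiff_elu_of_mem_Icc_neg hh ⟨hx.1, hx0⟩, abs_of_nonpos hx0]
    have : exp x ≤ 1 := exp_le_one_iff.mpr hx0
    refine (abs_add_mul_le (by linarith [hx.1]) (abs_le.mpr ⟨?_, ?_⟩)).trans_eq (by ring)
    · nlinarith [mul_pos (exp_pos (-h)) (exp_pos x)]
    · nlinarith [exp_pos x]
  · rw [secondDiff_elu_of_mem_Icc hh ⟨hx0, hx.2⟩, abs_of_nonneg hx0]
    have : exp (-h) * exp x ≤ 1 := by
      rw [← exp_add]; exact exp_le_one_iff.mpr (by linarith [hx.2])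
    refine (abs_add_mul_le (by linarith [hx.2]) (abs_le.mpr ⟨?_, by linarith⟩)).trans_eq
      (by ring)
    linarith [mul_pos (exp_pos (-h)) (exp_pos x)]

theorem abs_secondDiff_elu_le (α h x : ℝ) : |secondDiff (elu α) h x| ≤ |h| + |α| := by
  wlog hh : 0 ≤ h generalizing h
  · simpa [secondDiff_neg] using this (-h) (by linarith)
  rw [abs_of_nonneg hh]
  rcases le_or_gt x (-h) with hx | hx
  · rw [abs_secondDiff_elu_of_le_neg hh hx]
    have hsq : (1 - exp (-h)) ^ 2 ≤ 1 := by
      have := exp_le_one_iff.mpr (by linarith : -h ≤ 0)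
      nlinarith [exp_pos (-h)]
    have hexp : exp (x + h) ≤ 1 := exp_le_one_iff.mpr (by linarith)
    have : (1 - exp (-h)) ^ 2 * exp (x + h) ≤ 1 := mul_le_one₀ hsq (exp_pos _).le hexp
    nlinarith [abs_nonneg α]
  rcases le_or_gt x h with hx' | hx'
  · linarith [abs_secondDiff_elu_le_of_mem_Icc (α := α) hh ⟨hx.le, hx'⟩, abs_nonneg x]
  · rw [secondDiff_elu_of_le hh hx'.le, abs_zero]
    positivity

end Bounds

theorem integrable_secondDiff_elu (α h : ℝ) : Integrable (secondDiff (elu α) h) := by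
  wlog hh : 0 ≤ h generalizing h
  · simpa [secondDiff_neg] using this (-h) (by linarith)
  refine ((continuous_elu α).secondDiff h).integrable_of_integrableOn_Iic_of_integrableOn_Ioi
    (a := -h) (b := h) ?_ ?_
  · have : IntegrableOn (fun x => α * (1 - exp (-h)) ^ 2 * exp h * exp x) (Iic (-h)) :=
      (integrableOn_exp_Iic _).const_mul _
    refine this.congr_fun (fun x hx => ?_) measurableSet_Iic
    rw [secondDiff_elu_of_le_neg hh hx, exp_add]
    ring
  · exact integrableOn_zero.congr_fun (fun x hx => (secondDiff_elu_of_le hh hx.le).symm)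
      measurableSet_Ioi

theorem integral_secondDiff_elu (α h : ℝ) : ∫ x, secondDiff (elu α) h x = h ^ 2 := by
  wlog hh : 0 ≤ h generalizing h
  · simpa [secondDiff_neg] using this (-h) (by linarith)
  set E := exp (-h) with hE
  have hint : ∀ a b, IntervalIntegrable (secondDiff (elu α) h) volume a b :=
    fun a b => ((continuous_elu α).secondDiff h).intervalIntegrable a b
  have left : ∫ x in Iic (-h), secondDiff (elu α) h x = α * (1 - E) ^ 2 := by
    rw [setIntegral_congr_fun measurableSet_Iic fun x hx => secondDiff_elu_of_le_neg hh hx,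
      integral_mul_exp_add_Iic]
  have mid_neg :
      ∫ x in (-h)..0, secondDiff (elu α) h x = h ^ 2 / 2 + α * h - α * (2 - E) * (1 - E) := by
    rw [intervalIntegral.integral_congr (g := fun x => (h + α) + 1 * x + -(α * (2 - E)) * exp x)
      fun x hx => ?_, integral_const_add_mul_add_mul_exp]
    · simp only [exp_zero]
      ring
    · rw [uIcc_of_le (by linarith)] at hx
      simp only [secondDiff_elu_of_mem_Icc_neg hh hx]
      ring
  have mid_pos :
      ∫ x in (0:ℝ)..h, secondDiff (elu α) h x = h ^ 2 / 2 - α * h + α * (1 - E) := by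
    rw [intervalIntegral.integral_congr (g := fun x => (h - α) + (-1) * x + α * E * exp x)
      fun x hx => ?_, integral_const_add_mul_add_mul_exp]
    · rw [exp_zero, hE, exp_neg]
      field_simp
      ring
    · rw [uIcc_of_le hh] at hx
      simp only [secondDiff_elu_of_mem_Icc hh hx]
      ring
  have right : ∫ x in Ioi h, secondDiff (elu α) h x = 0 := by
    rw [setIntegral_congr_fun measurableSet_Ioi fun x hx => secondDiff_elu_of_le hh hx.le,
      integral_zero]
  rw [integral_eq_Iic_add_intervalIntegral_add_Ioi (integrable_secondDiff_elu α h) (-h) h,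
    ← intervalIntegral.integral_add_adjacent_intervals (hint _ 0) (hint 0 _), left, mid_neg,
    mid_pos, right]
  ring

theorem integral_abs_secondDiff_elu_le (α h : ℝ) :
    ∫ x, |secondDiff (elu α) h x| ≤ h ^ 2 + 2 * |α| * |h| + |α| * (1 - exp (-|h|)) ^ 2 := by
  wlog hh : 0 ≤ h generalizing h
  · simpa [secondDiff_neg] using this (-h) (by linarith)
  rw [abs_of_nonneg hh]
  have left : ∫ x in Iic (-h), |secondDiff (elu α) h x| = |α| * (1 - exp (-h)) ^ 2 := by
    rw [setIntegral_congr_fun measurableSet_Iic fun x hx => abs_secondDiff_elu_of_le_neg hh hx,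
      integral_mul_exp_add_Iic]
  have mid : ∫ x in (-h)..h, |secondDiff (elu α) h x| ≤ h ^ 2 + 2 * |α| * h :=
    calc ∫ x in (-h)..h, |secondDiff (elu α) h x|
        ≤ ∫ x in (-h)..h, (h - |x| + |α|) :=
          intervalIntegral.integral_mono_on (by linarith)
            (((continuous_elu α).secondDiff h).abs.intervalIntegrable _ _)
            ((by fun_prop : Continuous fun x : ℝ => h - |x| + |α|).intervalIntegrable _ _)
            fun x hx => abs_secondDiff_elu_le_of_mem_Icc hh hx
      _ = h ^ 2 + 2 * |α| * h := by
          rw [intervalIntegral.integral_add (f := fun x => h - |x|)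
              ((continuous_const.sub continuous_abs).intervalIntegrable _ _)
              intervalIntegrable_const,
            intervalIntegral.integral_sub (f := fun _ => h) intervalIntegrable_const
              (continuous_abs.intervalIntegrable _ _), integral_abs_neg_self hh]
          simp only [intervalIntegral.integral_const, smul_eq_mul]
          ring
  have right : ∫ x in Ioi h, |secondDiff (elu α) h x| = 0 := by
    rw [setIntegral_congr_fun measurableSet_Ioi fun x hx => by
      rw [secondDiff_elu_of_le hh hx.le, abs_zero], integral_zero]
  rw [integral_eq_Iic_add_intervalIntegral_add_Ioi (integrable_secondDiff_elu α h).abs (-h) h,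
    left, right]
  linarith

/-- Properties of the second central difference of the exponential linear unit (ELU):
integrability with integral `h²`, an `L¹` bound, and a uniform bound for `|h| ≤ 1`. -/
theorem stmt_12 (α : ℝ) (σ : ℝ → ℝ)
    (hσ : ∀ x : ℝ, σ x = if x ≤ 0 then α * (Real.exp x - 1) else x)
    (D : ℝ → ℝ → ℝ)
    (hD : ∀ x h : ℝ, D x h = σ (x + h) - 2 * σ x + σ (x - h)) :
    ∀ h : ℝ,
      Integrable (fun x => D x h) ∧
      (∫ x : ℝ, D x h) = h ^ 2 ∧
      (∫ x : ℝ, |D x h|) ≤ h ^ 2 + 2 * |α| * |h| + 2 * |α| * (Real.exp (-|h|) - 1) ^ 2 ∧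
      (|h| ≤ 1 → ∀ x : ℝ, |D x h| ≤ max (1 + 4 * |α|) (2 + |α|)) := by
  intro h
  obtain rfl : σ = elu α := funext hσ
  obtain rfl : D = fun x h => secondDiff (elu α) h x := funext₂ hD
  refine ⟨integrable_secondDiff_elu α h, integral_secondDiff_elu α h, ?_, fun hh x => ?_⟩
  · refine (integral_abs_secondDiff_elu_le α h).trans ?_
    have : (1 - exp (-|h|)) ^ 2 = (exp (-|h|) - 1) ^ 2 := by ring
    nlinarith [mul_nonneg (abs_nonneg α) (sq_nonneg (exp (-|h|) - 1))]
  · exact (abs_secondDiff_elu_le α h x).trans (le_max_of_le_right (by linarith))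
end

section
/- Let σ(x) := x · tanh(log(1 + e^x)) be the Mish activation. Then its second derivative σ'' : ℝ → ℝ is continuous, bounded (there exists M > 0 with |σ''(x)| ≤ M for all x ∈ ℝ), and Lebesgue integrable, i.e., σ'' ∈ L¹(ℝ). -/
/-!
Since `tanh (log s) = 1 - 2 / (s² + 1)`, the Mish activation is `x · g x` with
`g x = 1 - 2 / ((1 + eˣ)² + 1)`, so `σ'' = 2 g' + x g''`. Both `g'` and `g''` are bounded
by `2 eˣ / ((1 + eˣ)² + 1) ≤ 2 e^{-|x|}`, hence
`|σ'' x| ≤ 4 (1 + |x|) e^{-|x|} ≤ 24 / (1 + x²)`, which is bounded and integrable.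
-/

open MeasureTheory Real

theorem Real.tanh_log {s : ℝ} (hs : 0 < s) : tanh (log s) = 1 - 2 / (s ^ 2 + 1) := by
  rw [tanh_eq_sinh_div_cosh, sinh_eq, cosh_eq, exp_neg, exp_log hs]
  field_simp
  ring

theorem deriv_deriv_id_mul {𝕜 : Type*} [NontriviallyNormedField 𝕜] {h h' h'' : 𝕜 → 𝕜}
    (hh : ∀ x, HasDerivAt h (h' x) x) (hh' : ∀ x, HasDerivAt h' (h'' x) x) :
    deriv (deriv fun x => x * h x) = fun x => 2 * h' x + x * h'' x := by
  have h1 : deriv (fun x => x * h x) = fun x => h x + x * h' x :=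
    funext fun x => by simpa using ((hasDerivAt_id' x).fun_mul (hh x)).deriv
  rw [h1]
  funext x
  rw [((hh x).fun_add ((hasDerivAt_id' x).fun_mul (hh' x))).deriv]
  ring

theorem Real.one_add_sq_mul_one_add_le_exp {u : ℝ} (hu : 0 ≤ u) :
    (1 + u ^ 2) * (1 + u) ≤ 6 * exp u := by
  have := sum_le_exp_of_nonneg hu 4
  simp only [Finset.sum_range_succ, Finset.sum_range_zero, Nat.factorial] at this
  norm_num at this
  nlinarith [sq_nonneg u, pow_nonneg hu 3]

namespace Mish

noncomputable def denom (x : ℝ) : ℝ := (1 + exp x) ^ 2 + 1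

noncomputable def tanhSoftplus (x : ℝ) : ℝ := 1 - 2 / denom x

noncomputable def tanhSoftplusDeriv (x : ℝ) : ℝ := 4 * exp x * (1 + exp x) / denom x ^ 2

noncomputable def tanhSoftplusDeriv2 (x : ℝ) : ℝ :=
  4 * exp x * (2 + 2 * exp x - 3 * exp x ^ 2 - 2 * exp x ^ 3) / denom x ^ 3

lemma one_le_denom (x : ℝ) : 1 ≤ denom x := by
  unfold denom; nlinarith [exp_pos x]

lemma denom_pos (x : ℝ) : 0 < denom x := one_pos.trans_le (one_le_denom x)

lemma tanh_log_one_add_exp (x : ℝ) : tanh (log (1 + exp x)) = tanhSoftplus x := by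
  rw [Real.tanh_log (by positivity), tanhSoftplus, denom]

lemma hasDerivAt_denom (x : ℝ) : HasDerivAt denom (2 * exp x * (1 + exp x)) x := by
  refine ((((hasDerivAt_exp x).const_add 1).pow 2).add_const 1).congr_deriv ?_
  ring

lemma hasDerivAt_tanhSoftplus (x : ℝ) : HasDerivAt tanhSoftplus (tanhSoftplusDeriv x) x := by
  refine (((hasDerivAt_const x 2).fun_div (hasDerivAt_denom x)
    (denom_pos x).ne').const_sub 1).congr_deriv ?_
  rw [tanhSoftplusDeriv]
  ring

lemma hasDerivAt_tanhSoftplusDeriv (x : ℝ) :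
    HasDerivAt tanhSoftplusDeriv (tanhSoftplusDeriv2 x) x := by
  have hnum := ((hasDerivAt_exp x).const_mul 4).fun_mul ((hasDerivAt_exp x).const_add 1)
  refine (hnum.fun_div ((hasDerivAt_denom x).fun_pow 2)
    (pow_ne_zero 2 (denom_pos x).ne')).congr_deriv ?_
  have := (denom_pos x).ne'
  rw [tanhSoftplusDeriv2]
  field_simp
  simp only [denom]
  ring

lemma continuous_tanhSoftplusDeriv : Continuous tanhSoftplusDeriv := by
  have := denom_pos
  unfold tanhSoftplusDeriv denom at *
  fun_prop (disch := exact fun x => pow_ne_zero _ (this x).ne')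

lemma continuous_tanhSoftplusDeriv2 : Continuous tanhSoftplusDeriv2 := by
  have := denom_pos
  unfold tanhSoftplusDeriv2 denom at *
  fun_prop (disch := exact fun x => pow_ne_zero _ (this x).ne')

lemma abs_tanhSoftplusDeriv_le (x : ℝ) : |tanhSoftplusDeriv x| ≤ 2 * (exp x / denom x) := by
  have hD := denom_pos x
  have ht := exp_pos x
  rw [tanhSoftplusDeriv, abs_of_pos (by positivity), div_le_iff₀ (by positivity)]
  field_simp
  simp only [denom]
  nlinarith

lemma abs_tanhSoftplusDeriv2_le (x : ℝ) : |tanhSoftplusDeriv2 x| ≤ 2 * (exp x / denom x) := by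
  have hD := denom_pos x
  have ht := exp_pos x
  set p := 2 * (2 + 2 * exp x - 3 * exp x ^ 2 - 2 * exp x ^ 3)
  have hp : |p| ≤ denom x ^ 2 := by
    simp only [p, denom, abs_le]
    constructor <;> nlinarith [pow_pos ht 2, pow_pos ht 3, pow_pos ht 4]
  have hsplit : tanhSoftplusDeriv2 x = 2 * (exp x / denom x) * (p / denom x ^ 2) := by
    rw [tanhSoftplusDeriv2]; field_simp; ring
  rw [hsplit, abs_mul, abs_of_pos (by positivity : 0 < 2 * (exp x / denom x)), abs_div,
    abs_of_pos (by positivity : 0 < denom x ^ 2)]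
  exact mul_le_of_le_one_right (by positivity) ((div_le_one (by positivity)).2 hp)

lemma exp_div_denom_le (x : ℝ) : exp x / denom x ≤ exp (-|x|) := by
  have hD := denom_pos x
  have ht := exp_pos x
  rw [div_le_iff₀ hD]
  rcases le_total 0 x with hx | hx
  · rw [abs_of_nonneg hx, exp_neg]
    field_simp
    simp only [denom]
    nlinarith
  · rw [abs_of_nonpos hx, neg_neg]
    nlinarith [one_le_denom x]

noncomputable def secondDeriv (x : ℝ) : ℝ := 2 * tanhSoftplusDeriv x + x * tanhSoftplusDeriv2 x

lemma deriv_deriv_mul_tanhSoftplus : deriv (deriv fun x => x * tanhSoftplus x) = secondDeriv :=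
  deriv_deriv_id_mul hasDerivAt_tanhSoftplus hasDerivAt_tanhSoftplusDeriv

lemma continuous_secondDeriv : Continuous secondDeriv :=
  (continuous_const.mul continuous_tanhSoftplusDeriv).add
    (continuous_id.mul continuous_tanhSoftplusDeriv2)

lemma abs_secondDeriv_le (x : ℝ) : |secondDeriv x| ≤ 24 * (1 + x ^ 2)⁻¹ := by
  have hpoly := Real.one_add_sq_mul_one_add_le_exp (abs_nonneg x)
  rw [sq_abs] at hpoly
  calc |secondDeriv x|
      ≤ 2 * |tanhSoftplusDeriv x| + |x| * |tanhSoftplusDeriv2 x| := by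
        rw [secondDeriv]
        simpa only [abs_mul, abs_two] using
          abs_add_le (2 * tanhSoftplusDeriv x) (x * tanhSoftplusDeriv2 x)
    _ ≤ 4 * (1 + |x|) * (exp x / denom x) := by
        have hq : 0 ≤ exp x / denom x := div_nonneg (exp_pos x).le (denom_pos x).le
        nlinarith [abs_tanhSoftplusDeriv_le x, mul_nonneg (abs_nonneg x) hq,
          mul_le_mul_of_nonneg_left (abs_tanhSoftplusDeriv2_le x) (abs_nonneg x)]
    _ ≤ 4 * (1 + |x|) * exp (-|x|) := by gcongr; exact exp_div_denom_le x
    _ ≤ 24 * (1 + x ^ 2)⁻¹ := by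
        rw [exp_neg, le_mul_inv_iff₀ (by positivity)]
        field_simp
        nlinarith [exp_pos |x|]

end Mish

/-- The second derivative of the Mish activation `σ(x) = x tanh(log(1+eˣ))` is continuous,
bounded, and Lebesgue integrable on `ℝ`. -/
theorem stmt_16 (σ : ℝ → ℝ)
    (hσ : ∀ x : ℝ, σ x = x * Real.tanh (Real.log (1 + Real.exp x))) :
    Continuous (deriv (deriv σ)) ∧
    (∃ M : ℝ, 0 < M ∧ ∀ x : ℝ, |deriv (deriv σ) x| ≤ M) ∧
    Integrable (deriv (deriv σ)) := by
  have hσ_eq : σ = fun x => x * Mish.tanhSoftplus x :=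
    funext fun x => by rw [hσ, Mish.tanh_log_one_add_exp]
  rw [hσ_eq, Mish.deriv_deriv_mul_tanhSoftplus]
  refine ⟨Mish.continuous_secondDeriv, ⟨24, by norm_num, fun x => ?_⟩, ?_⟩
  · refine (Mish.abs_secondDeriv_le x).trans ?_
    exact mul_le_of_le_one_right (by norm_num) (inv_le_one_of_one_le₀ (by nlinarith))
  · exact (integrable_inv_one_add_sq.const_mul 24).mono'
      Mish.continuous_secondDeriv.aestronglyMeasurable (ae_of_all _ Mish.abs_secondDeriv_le)
end
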